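/- arXiv:2106.00913 — 15 statements merged into one kernel-verified Lean document; each statement's English description precedes it below -/
import Mathlib

section
/- Let G be a finite simple graph with no isolated vertices and let α, β be real numbers with 0 < α < β. Then SDD_α(G) ≤ SDD_β(G). -/
open Real Finset

noncomputable def SDD {V : Type*} [Fintype V] (G : SimpleGraph V) [DecidableRel G.Adj]
    (α : ℝ) : ℝ :=
  ∑ e ∈ G.edgeFinset, Sym2.lift
    ⟨fun u v => (G.degree u : ℝ) ^ α / (G.degree v : ℝ) ^ α +
                (G.degree v : ℝ) ^ α / (G.degree u : ℝ) ^ α,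
     fun u v => by ring⟩ e

private lemma key_t {α β : ℝ} (hα : 0 < α) (hαβ : α < β) {t : ℝ} (ht : 1 ≤ t) :
    t ^ α + t ^ (-α) ≤ t ^ β + t ^ (-β) := by
  have ht0 : 0 < t := lt_of_lt_of_le one_pos ht
  have hA : (1:ℝ) ≤ t ^ α := Real.one_le_rpow ht hα.le
  have hAB : t ^ α ≤ t ^ β := Real.rpow_le_rpow_of_exponent_le ht hαβ.le
  have hA0 : 0 < t ^ α := Real.rpow_pos_of_pos ht0 α
  have hB0 : 0 < t ^ β := Real.rpow_pos_of_pos ht0 β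
  rw [Real.rpow_neg ht0.le, Real.rpow_neg ht0.le]
  have h1 : (1:ℝ) ≤ t ^ α * t ^ β := le_trans hA (le_mul_of_one_le_right hA0.le (le_trans hA hAB))
  have hAi : t ^ α * (t ^ α)⁻¹ = 1 := mul_inv_cancel₀ (ne_of_gt hA0)
  have hBi : t ^ β * (t ^ β)⁻¹ = 1 := mul_inv_cancel₀ (ne_of_gt hB0)
  have hiA : 0 < (t ^ α)⁻¹ := by positivity
  have hiB : 0 < (t ^ β)⁻¹ := by positivity
  nlinarith [mul_le_mul_of_nonneg_left hAB hiA.le, mul_le_mul_of_nonneg_left hAB hiB.le]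

private lemma key_ab {α β : ℝ} (hα : 0 < α) (hαβ : α < β) {a b : ℝ} (ha : 1 ≤ a) (hb : 1 ≤ b)
    (hba : b ≤ a) :
    a ^ α / b ^ α + b ^ α / a ^ α ≤ a ^ β / b ^ β + b ^ β / a ^ β := by
  have ha0 : 0 < a := lt_of_lt_of_le one_pos ha
  have hb0 : 0 < b := lt_of_lt_of_le one_pos hb
  have ht : 1 ≤ a / b := (one_le_div hb0).mpr hba
  have h1 : ∀ γ : ℝ, a ^ γ / b ^ γ = (a/b) ^ γ := fun γ => (Real.div_rpow ha0.le hb0.le γ).symm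
  have h2 : ∀ γ : ℝ, b ^ γ / a ^ γ = (a/b) ^ (-γ) := by
    intro γ
    rw [Real.rpow_neg (by positivity : (0:ℝ) ≤ a/b), ← Real.inv_rpow (by positivity : (0:ℝ) ≤ a/b),
      inv_div]
    exact (Real.div_rpow hb0.le ha0.le γ).symm
  rw [h1 α, h1 β, h2 α, h2 β]
  exact key_t hα hαβ ht

theorem sdd_monotone {V : Type*} [Fintype V] (G : SimpleGraph V) [DecidableRel G.Adj]
    (hG : ∀ v : V, 0 < G.degree v) {α β : ℝ} (hα : 0 < α) (hαβ : α < β) :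
    SDD G α ≤ SDD G β := by
  unfold SDD
  apply Finset.sum_le_sum
  intro e he
  induction e using Sym2.ind with
  | _ u v =>
    simp only [Sym2.lift_mk]
    have hu : (1:ℝ) ≤ G.degree u := by exact_mod_cast hG u
    have hv : (1:ℝ) ≤ G.degree v := by exact_mod_cast hG v
    rcases le_total (G.degree v : ℝ) (G.degree u : ℝ) with h | h
    · exact key_ab hα hαβ hu hv h
    · rw [add_comm ((G.degree u:ℝ)^α / _), add_comm ((G.degree u:ℝ)^β / _)]
      exact key_ab hα hαβ hv hu h
end

section
/- Let G be a finite simple graph with no isolated vertices and let α, β be real numbers with 0 < α < β. Then SDD_α(G) = SDD_β(G) if and only if d_u = d_v for every edge uv ∈ E(G) (equivalently, each connected component of G is a regular graph). -/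
open Real Finset

lemma strict_aux {α β : ℝ} (hα : 0 < α) (hαβ : α < β) {t : ℝ} (ht : 0 < t) (hne : t ≠ 1) :
    t ^ α + t ^ (-α) < t ^ β + t ^ (-β) := by
  have h1 : t ^ (β - α) * t ^ α = t ^ β := by
    rw [← Real.rpow_add ht]; ring_nf
  have h2 : t ^ (β - α) * t ^ (-β) = t ^ (-α) := by
    rw [← Real.rpow_add ht]; ring_nf
  rcases lt_or_gt_of_ne hne with hlt | hgt
  · have hf1 : t ^ (β - α) < 1 := Real.rpow_lt_one ht.le hlt (by linarith)
    have hf2 : t ^ α < t ^ (-β) :=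
      Real.rpow_lt_rpow_of_exponent_gt ht hlt (by linarith)
    nlinarith
  · have hf1 : 1 < t ^ (β - α) :=
      Real.one_lt_rpow_iff_of_pos ht |>.mpr (Or.inl ⟨hgt, by linarith⟩)
    have hf2 : t ^ (-β) < t ^ α :=
      Real.rpow_lt_rpow_of_exponent_lt hgt (by linarith)
    nlinarith

lemma conv_aux {a b : ℝ} (ha : 0 < a) (hb : 0 < b) (γ : ℝ) :
    a ^ γ / b ^ γ + b ^ γ / a ^ γ = (a / b) ^ γ + (a / b) ^ (-γ) := by
  rw [Real.rpow_neg (by positivity), Real.div_rpow ha.le hb.le, inv_div]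

lemma term_lt {α β : ℝ} (hα : 0 < α) (hαβ : α < β) {a b : ℝ} (ha : 0 < a) (hb : 0 < b)
    (hab : a ≠ b) :
    a ^ α / b ^ α + b ^ α / a ^ α < a ^ β / b ^ β + b ^ β / a ^ β := by
  rw [conv_aux ha hb, conv_aux ha hb]
  exact strict_aux hα hαβ (by positivity)
    (fun h => hab ((div_eq_one_iff_eq hb.ne').mp h))

lemma term_le {α β : ℝ} (hα : 0 < α) (hαβ : α < β) {a b : ℝ} (ha : 0 < a) (hb : 0 < b) :
    a ^ α / b ^ α + b ^ α / a ^ α ≤ a ^ β / b ^ β + b ^ β / a ^ β := by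
  by_cases hab : a = b
  · subst hab
    rw [div_self (by positivity), div_self (by positivity)]
  · exact (term_lt hα hαβ ha hb hab).le

theorem sdd_eq_iff_components_regular {V : Type*} [Fintype V] (G : SimpleGraph V)
    [DecidableRel G.Adj] (hG : ∀ v : V, 0 < G.degree v) {α β : ℝ} (hα : 0 < α)
    (hαβ : α < β) :
    SDD G α = SDD G β ↔ ∀ u v : V, G.Adj u v → G.degree u = G.degree v := by
  have hd : ∀ v : V, (0 : ℝ) < (G.degree v : ℝ) := fun v => by exact_mod_cast hG v
  constructor
  · intro hsum u v huv
    by_contra hne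
    have hne' : ((G.degree u : ℝ)) ≠ (G.degree v : ℝ) := by exact_mod_cast hne
    have hlt : SDD G α < SDD G β := by
      apply Finset.sum_lt_sum
      · intro e he
        induction e using Sym2.ind with
        | _ x y =>
          simp only [Sym2.lift_mk]
          exact term_le hα hαβ (hd x) (hd y)
      · refine ⟨s(u, v), SimpleGraph.mem_edgeFinset.mpr huv, ?_⟩
        simp only [Sym2.lift_mk]
        exact term_lt hα hαβ (hd u) (hd v) hne'
    exact absurd hsum hlt.ne
  · intro h
    unfold SDD
    apply Finset.sum_congr rfl
    intro e he
    induction e using Sym2.ind with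
    | _ x y =>
      have hxy : G.Adj x y := SimpleGraph.mem_edgeFinset.mp he
      have : (G.degree x : ℝ) = (G.degree y : ℝ) := by exact_mod_cast h x y hxy
      simp only [Sym2.lift_mk, this]
      rw [div_self (Real.rpow_pos_of_pos (hd y) α).ne',
        div_self (Real.rpow_pos_of_pos (hd y) β).ne']
end

section
/- Let G be a finite simple graph with minimum degree δ ≥ 1, and let α > 0 be real. Then 2 δ^{2α} M2^{-α}(G) ≤ SDD_α(G). -/
open Real Finset

noncomputable def M2 {V : Type*} [Fintype V] (G : SimpleGraph V) [DecidableRel G.Adj]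
    (α : ℝ) : ℝ :=
  ∑ e ∈ G.edgeFinset, Sym2.lift
    ⟨fun u v => ((G.degree u : ℝ) * (G.degree v : ℝ)) ^ α,
     fun u v => by dsimp only; rw [mul_comm]⟩ e

lemma key_ineq {d du dv α : ℝ} (hd : 1 ≤ d) (h1 : d ≤ du) (h2 : d ≤ dv) (hα : 0 < α) :
    2 * d ^ (2 * α) * (du * dv) ^ (-α) ≤ du ^ α / dv ^ α + dv ^ α / du ^ α := by
  have hd0 : (0:ℝ) < d := lt_of_lt_of_le one_pos hd
  have hu0 : (0:ℝ) < du := lt_of_lt_of_le hd0 h1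
  have hv0 : (0:ℝ) < dv := lt_of_lt_of_le hd0 h2
  have ha : (0:ℝ) < du ^ α := rpow_pos_of_pos hu0 α
  have hb : (0:ℝ) < dv ^ α := rpow_pos_of_pos hv0 α
  have hc : (0:ℝ) < d ^ α := rpow_pos_of_pos hd0 α
  have hca : d ^ α ≤ du ^ α := rpow_le_rpow hd0.le h1 hα.le
  have hcb : d ^ α ≤ dv ^ α := rpow_le_rpow hd0.le h2 hα.le
  have e1 : d ^ (2 * α) = d ^ α * d ^ α := by
    rw [two_mul, rpow_add hd0]
  have e2 : (du * dv) ^ (-α) = (du ^ α * dv ^ α)⁻¹ := by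
    rw [rpow_neg (mul_nonneg hu0.le hv0.le), mul_rpow hu0.le hv0.le]
  rw [e1, e2]
  set a := du ^ α
  set b := dv ^ α
  set c := d ^ α
  rw [div_add_div _ _ hb.ne' ha.ne', inv_eq_one_div, mul_one_div, div_le_div_iff₀ (by positivity) (by positivity)]
  nlinarith [sq_nonneg (a - b), mul_pos ha hb, mul_le_mul hca hcb hc.le ha.le]

theorem sdd_ge_m2 {V : Type*} [Fintype V] (G : SimpleGraph V) [DecidableRel G.Adj]
    (hδ : 1 ≤ G.minDegree) {α : ℝ} (hα : 0 < α) :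
    2 * (G.minDegree : ℝ) ^ (2 * α) * M2 G (-α) ≤ SDD G α := by
  unfold SDD M2
  rw [Finset.mul_sum]
  apply Finset.sum_le_sum
  intro e he
  induction e using Sym2.inductionOn with
  | hf u v =>
    simp only [Sym2.lift_mk]
    have hadj : G.Adj u v := by rwa [SimpleGraph.mem_edgeFinset, SimpleGraph.mem_edgeSet] at he
    have h1 : (G.minDegree : ℝ) ≤ G.degree u := by
      exact_mod_cast G.minDegree_le_degree u
    have h2 : (G.minDegree : ℝ) ≤ G.degree v := by
      exact_mod_cast G.minDegree_le_degree v
    exact key_ineq (by exact_mod_cast hδ) h1 h2 hα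
end

section
/- Let G be a finite simple graph with no isolated vertices and maximum degree Δ, and let α > 0 be real. Then SDD_α(G) ≤ 2 Δ^{2α} M2^{-α}(G). -/
open Real Finset

theorem sdd_le_m2 {V : Type*} [Fintype V] (G : SimpleGraph V) [DecidableRel G.Adj]
    (hG : ∀ v : V, 0 < G.degree v) {α : ℝ} (hα : 0 < α) :
    SDD G α ≤ 2 * (G.maxDegree : ℝ) ^ (2 * α) * M2 G (-α) := by
  rw [SDD, M2, Finset.mul_sum]
  apply Finset.sum_le_sum
  intro e he
  induction e using Sym2.ind with
  | _ u v =>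
    simp only [Sym2.lift_mk]
    have hu : (0:ℝ) < (G.degree u : ℝ) := by exact_mod_cast hG u
    have hv : (0:ℝ) < (G.degree v : ℝ) := by exact_mod_cast hG v
    have hΔ : (0:ℝ) < (G.maxDegree : ℝ) := lt_of_lt_of_le hu (by
      exact_mod_cast G.degree_le_maxDegree u)
    set A := (G.degree u : ℝ) ^ α with hA
    set B := (G.degree v : ℝ) ^ α with hB
    set D := (G.maxDegree : ℝ) ^ α with hD
    have hApos : 0 < A := Real.rpow_pos_of_pos hu α
    have hBpos : 0 < B := Real.rpow_pos_of_pos hv α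
    have hAD : A ≤ D :=
      Real.rpow_le_rpow hu.le (by exact_mod_cast G.degree_le_maxDegree u) hα.le
    have hBD : B ≤ D :=
      Real.rpow_le_rpow hv.le (by exact_mod_cast G.degree_le_maxDegree v) hα.le
    have h2 : (G.maxDegree : ℝ) ^ (2 * α) = D ^ 2 := by
      rw [hD, mul_comm, Real.rpow_mul hΔ.le]
      norm_num
    have hm : ((G.degree u : ℝ) * (G.degree v : ℝ)) ^ (-α) = (A * B)⁻¹ := by
      rw [Real.rpow_neg (mul_nonneg hu.le hv.le), Real.mul_rpow hu.le hv.le]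
    rw [h2, hm, ← div_eq_mul_inv, div_add_div _ _ (ne_of_gt hBpos) (ne_of_gt hApos),
      div_le_div_iff₀ (mul_pos hBpos hApos) (mul_pos hApos hBpos)]
    nlinarith [mul_pos hApos hBpos, mul_le_mul hAD hAD hApos.le (hApos.le.trans hAD),
      mul_le_mul hBD hBD hBpos.le (hBpos.le.trans hBD), mul_pos hApos hApos, mul_pos hBpos hBpos]
end

section
/- Let G be a finite simple graph with no isolated vertices and maximum degree Δ, and let α > 0 be real. Then Δ^{-2α} M1^{2α+1}(G) ≤ SDD_α(G). -/
open Real Finset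

noncomputable def M1 {V : Type*} [Fintype V] (G : SimpleGraph V) [DecidableRel G.Adj]
    (α : ℝ) : ℝ :=
  ∑ u : V, (G.degree u : ℝ) ^ α

/-- Key identity: a symmetric sum over edges equals a weighted vertex sum. -/
lemma sum_edge_lift {V : Type*} [Fintype V] (G : SimpleGraph V) [DecidableRel G.Adj]
    (g : V → ℝ) :
    ∑ e ∈ G.edgeFinset, Sym2.lift ⟨fun u v => g u + g v, fun u v => by ring⟩ e
      = ∑ v : V, (G.degree v : ℝ) * g v := by
  classical
  have hmap : ∀ d : G.Dart, d ∈ (univ : Finset G.Dart) → d.edge ∈ G.edgeFinset := by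
    intro d _
    rw [SimpleGraph.mem_edgeFinset]
    exact d.edge_mem
  have h1 : ∑ d : G.Dart, g d.fst
      = ∑ e ∈ G.edgeFinset, ∑ d ∈ univ.filter (fun d : G.Dart => d.edge = e), g d.fst :=
    (Finset.sum_fiberwise_of_maps_to hmap _).symm
  have h2 : ∀ e ∈ G.edgeFinset,
      ∑ d ∈ univ.filter (fun d : G.Dart => d.edge = e), g d.fst
        = Sym2.lift ⟨fun u v => g u + g v, fun u v => by ring⟩ e := by
    intro e he
    induction e with
    | h u v =>
      rw [SimpleGraph.mem_edgeFinset, SimpleGraph.mem_edgeSet] at he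
      let d : G.Dart := ⟨(u, v), he⟩
      have hfib : (univ.filter (fun d' : G.Dart => d'.edge = s(u, v))) = {d, d.symm} := by
        ext d'
        simp only [mem_filter, mem_univ, true_and, mem_insert, mem_singleton]
        exact SimpleGraph.dart_edge_eq_iff d' d
      rw [hfib, Finset.sum_insert (by simpa using d.symm_ne.symm), Finset.sum_singleton]
      simp [d, SimpleGraph.Dart.symm]
  have h12 : ∑ e ∈ G.edgeFinset, Sym2.lift ⟨fun u v => g u + g v, fun u v => by ring⟩ e
      = ∑ d : G.Dart, g d.fst := by
    rw [h1]; exact (Finset.sum_congr rfl h2).symm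
  rw [h12]
  -- other fiberwise decomposition, over first vertex
  have h3 : ∑ d : G.Dart, g d.fst
      = ∑ v : V, ∑ d ∈ univ.filter (fun d : G.Dart => d.fst = v), g d.fst :=
    (Finset.sum_fiberwise_of_maps_to (fun d _ => mem_univ _) _).symm
  have h4 : ∀ v : V, ∑ d ∈ univ.filter (fun d : G.Dart => d.fst = v), g d.fst
      = (G.degree v : ℝ) * g v := by
    intro v
    have : ∀ d ∈ univ.filter (fun d : G.Dart => d.fst = v), g d.fst = g v := by
      intro d hd
      rw [mem_filter] at hd
      rw [hd.2]
    rw [Finset.sum_congr rfl this, Finset.sum_const, nsmul_eq_mul,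
      ← SimpleGraph.dart_fst_fiber_card_eq_degree]
  rw [h3, Finset.sum_congr rfl fun v _ => h4 v]

theorem sdd_ge_m1 {V : Type*} [Fintype V] (G : SimpleGraph V) [DecidableRel G.Adj]
    (hG : ∀ v : V, 0 < G.degree v) {α : ℝ} (hα : 0 < α) :
    (G.maxDegree : ℝ) ^ (-(2 * α)) * M1 G (2 * α + 1) ≤ SDD G α := by
  classical
  rcases isEmpty_or_nonempty V with hV | hV
  · have : G.edgeFinset = ∅ := Finset.eq_empty_of_isEmpty _
    simp [M1, SDD, this]
  obtain ⟨v0⟩ := hV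
  have hΔ : 0 < G.maxDegree := lt_of_lt_of_le (hG v0) (G.degree_le_maxDegree v0)
  have hΔR : (0 : ℝ) < (G.maxDegree : ℝ) := by exact_mod_cast hΔ
  set Δ : ℝ := (G.maxDegree : ℝ)
  have key : ∀ v : V, (0 : ℝ) < (G.degree v : ℝ) ∧ (G.degree v : ℝ) ≤ Δ := fun v =>
    ⟨by exact_mod_cast hG v, Nat.cast_le.mpr (G.degree_le_maxDegree v)⟩
  -- rewrite LHS as edge sum
  have hM1 : M1 G (2 * α + 1) = ∑ v : V, (G.degree v : ℝ) * (G.degree v : ℝ) ^ (2 * α) := by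
    unfold M1
    refine Finset.sum_congr rfl fun v _ => ?_
    rw [Real.rpow_add (key v).1, Real.rpow_one, mul_comm]
  have hid := sum_edge_lift G (fun v => Δ ^ (-(2*α)) * (G.degree v : ℝ) ^ (2 * α))
  have hLHS : Δ ^ (-(2 * α)) * M1 G (2 * α + 1)
      = ∑ e ∈ G.edgeFinset, Sym2.lift ⟨fun u v => Δ ^ (-(2*α)) * (G.degree u : ℝ) ^ (2*α)
          + Δ ^ (-(2*α)) * (G.degree v : ℝ) ^ (2*α), fun u v => by ring⟩ e := by
    rw [hid, hM1, Finset.mul_sum]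
    exact Finset.sum_congr rfl fun v _ => by ring
  rw [hLHS]
  unfold SDD
  apply Finset.sum_le_sum
  intro e he
  induction e with
  | h u v =>
    rw [SimpleGraph.mem_edgeFinset, SimpleGraph.mem_edgeSet] at he
    simp only [Sym2.lift_mk]
    obtain ⟨hu0, huΔ⟩ := key u
    obtain ⟨hv0, hvΔ⟩ := key v
    have hterm : ∀ x y : ℝ, 0 < x → x ≤ Δ → 0 < y → y ≤ Δ →
        Δ ^ (-(2*α)) * x ^ (2*α) ≤ x ^ α / y ^ α := by
      intro x y hx hxΔ hy hyΔ
      have hxa : x ^ α ≤ Δ ^ α := Real.rpow_le_rpow hx.le hxΔ hα.le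
      have hya : y ^ α ≤ Δ ^ α := Real.rpow_le_rpow hy.le hyΔ hα.le
      have hxp : (0:ℝ) < x ^ α := Real.rpow_pos_of_pos hx _
      have hyp : (0:ℝ) < y ^ α := Real.rpow_pos_of_pos hy _
      have hΔp : (0:ℝ) < Δ ^ α := Real.rpow_pos_of_pos hΔR _
      rw [Real.rpow_neg hΔR.le, two_mul, Real.rpow_add hx, Real.rpow_add hΔR,
        inv_mul_eq_div, div_le_div_iff₀ (by positivity) (by positivity)]
      nlinarith [mul_le_mul hxa hya hyp.le hΔp.le]
    exact add_le_add (hterm _ _ hu0 huΔ hv0 hvΔ) (hterm _ _ hv0 hvΔ hu0 huΔ)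
end

section
/- Let G be a finite simple graph with minimum degree δ ≥ 1, and let α > 0 be real. Then SDD_α(G) ≤ δ^{-2α} M1^{2α+1}(G). -/
/-!
Since every degree is at least `δ`, each summand satisfies
`d_u^α / d_v^α ≤ d_u^α / δ^α ≤ δ^(-2α) d_u^(2α)`. Writing `SDD_α` as a sum over darts `(u, v)`
of `d_u^α / d_v^α`, the bound depends only on the tail `u`, which is the tail of `d_u` darts;
so the sum is at most `δ^(-2α) ∑_u d_u · d_u^(2α) = δ^(-2α) M1^(2α+1)`.
-/

open Real Finset

namespace SimpleGraph

variable {V M : Type*} [Fintype V] (G : SimpleGraph V) [DecidableRel G.Adj] [AddCommMonoid M]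

theorem sum_edgeFinset_lift_add_swap (h : V → V → M) :
    ∑ e ∈ G.edgeFinset, Sym2.lift ⟨fun u v => h u v + h v u, fun _ _ => add_comm _ _⟩ e =
      ∑ d : G.Dart, h d.fst d.snd := by
  classical
  rw [← sum_fiberwise_of_maps_to (g := Dart.edge) (t := G.edgeFinset)
    fun d _ => mem_edgeFinset.mpr d.edge_mem]
  refine sum_congr rfl fun e he => ?_
  induction e with
  | _ u v =>
    let d : G.Dart := ⟨(u, v), mem_edgeFinset.mp he⟩
    rw [show ({d' : G.Dart | d'.edge = s(u, v)} : Finset _) = {d, d.symm} from d.edge_fiber,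
      sum_pair d.symm_ne.symm]
    rfl

theorem sum_darts_fst (f : V → M) : ∑ d : G.Dart, f d.fst = ∑ v, G.degree v • f v := by
  classical
  rw [← sum_fiberwise_of_maps_to (g := fun d : G.Dart => d.fst) (t := univ)
    fun _ _ => mem_univ _]
  refine sum_congr rfl fun v _ => ?_
  rw [sum_congr rfl fun d hd => congrArg f (mem_filter.mp hd).2, sum_const,
    G.dart_fst_fiber_card_eq_degree v]

end SimpleGraph

theorem Real.rpow_div_rpow_le_rpow_neg_mul_rpow {δ a b α : ℝ} (hδ : 0 < δ) (ha : δ ≤ a)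
    (hb : δ ≤ b) (hα : 0 ≤ α) : a ^ α / b ^ α ≤ δ ^ (-(2 * α)) * a ^ (2 * α) := by
  have hδα : 0 < δ ^ α := rpow_pos_of_pos hδ α
  have haα : δ ^ α ≤ a ^ α := rpow_le_rpow hδ.le ha hα
  have hbα : δ ^ α ≤ b ^ α := rpow_le_rpow hδ.le hb hα
  have haα0 : 0 ≤ a ^ α := hδα.le.trans haα
  have hsq : ∀ x : ℝ, 0 < x → x ^ (2 * α) = x ^ α * x ^ α := fun x hx => by
    rw [← rpow_add hx]; ring_nf
  rw [rpow_neg hδ.le, hsq δ hδ, hsq a (hδ.trans_le ha), ← div_eq_inv_mul,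
    div_le_div_iff₀ (hδα.trans_le hbα) (mul_pos hδα hδα)]
  calc a ^ α * (δ ^ α * δ ^ α) = a ^ α * δ ^ α * δ ^ α := by ring
    _ ≤ a ^ α * a ^ α * b ^ α :=
      mul_le_mul (mul_le_mul_of_nonneg_left haα haα0) hbα hδα.le (mul_nonneg haα0 haα0)

theorem SDD_le_rpow_neg_mul_M1 {V : Type*} [Fintype V] (G : SimpleGraph V)
    [DecidableRel G.Adj] {δ α : ℝ} (hδ : 0 < δ) (hdeg : ∀ v, δ ≤ G.degree v) (hα : 0 ≤ α) :
    SDD G α ≤ δ ^ (-(2 * α)) * M1 G (2 * α + 1) := by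
  let g (v : V) : ℝ := δ ^ (-(2 * α)) * (G.degree v : ℝ) ^ (2 * α)
  calc SDD G α
      = ∑ d : G.Dart, (G.degree d.fst : ℝ) ^ α / (G.degree d.snd : ℝ) ^ α :=
        G.sum_edgeFinset_lift_add_swap _
    _ ≤ ∑ d : G.Dart, g d.fst :=
        sum_le_sum fun d _ => rpow_div_rpow_le_rpow_neg_mul_rpow hδ (hdeg _) (hdeg _) hα
    _ = ∑ v, G.degree v • g v := G.sum_darts_fst g
    _ = δ ^ (-(2 * α)) * M1 G (2 * α + 1) := by
        rw [M1, mul_sum]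
        refine sum_congr rfl fun v _ => ?_
        rw [nsmul_eq_mul, rpow_add (hδ.trans_le (hdeg v)), rpow_one]
        ring

theorem sdd_le_m1 {V : Type*} [Fintype V] (G : SimpleGraph V) [DecidableRel G.Adj]
    (hδ : 1 ≤ G.minDegree) {α : ℝ} (hα : 0 < α) :
    SDD G α ≤ (G.minDegree : ℝ) ^ (-(2 * α)) * M1 G (2 * α + 1) :=
  SDD_le_rpow_neg_mul_M1 G (by exact_mod_cast hδ)
    (fun v => by exact_mod_cast G.minDegree_le_degree v) hα.le
end

section
/- Let G be a finite simple graph with at least one edge, no isolated vertices, minimum degree δ and maximum degree Δ, and let α > 0 be real. Then equality SDD_α(G) = 2 δ^{2α} M2^{-α}(G) holds if and only if G is regular, and equality SDD_α(G) = 2 Δ^{2α} M2^{-α}(G) holds if and only if G is regular. -/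
open Real Finset

lemma keymin (x y c : ℝ) (hx : 0 < x) (hy : 0 < y)
    (hcx : c ≤ x^2) (hcy : c ≤ y^2) :
    2*c/(x*y) ≤ x/y + y/x ∧ (x/y + y/x = 2*c/(x*y) ↔ x^2 = c ∧ y^2 = c) := by
  have hxy : 0 < x*y := mul_pos hx hy
  have h1 : x/y + y/x = (x^2+y^2)/(x*y) := by field_simp
  constructor
  · rw [h1]
    gcongr ?_ / (x*y)
    · linarith
  · rw [h1, div_eq_div_iff hxy.ne' hxy.ne']
    constructor
    · intro h
      have h2 : x^2 + y^2 = 2*c := mul_right_cancel₀ hxy.ne' h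
      constructor <;> nlinarith
    · rintro ⟨h1, h2⟩; rw [h1, h2]; ring

lemma keymax (x y c : ℝ) (hx : 0 < x) (hy : 0 < y)
    (hcx : x^2 ≤ c) (hcy : y^2 ≤ c) :
    x/y + y/x ≤ 2*c/(x*y) ∧ (x/y + y/x = 2*c/(x*y) ↔ x^2 = c ∧ y^2 = c) := by
  have hxy : 0 < x*y := mul_pos hx hy
  have h1 : x/y + y/x = (x^2+y^2)/(x*y) := by field_simp
  constructor
  · rw [h1]
    gcongr ?_ / (x*y)
    · linarith
  · rw [h1, div_eq_div_iff hxy.ne' hxy.ne']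
    constructor
    · intro h
      have h2 : x^2 + y^2 = 2*c := mul_right_cancel₀ hxy.ne' h
      constructor <;> nlinarith
    · rintro ⟨h1, h2⟩; rw [h1, h2]; ring

theorem sdd_m2_eq_iff_regular {V : Type*} [Fintype V] (G : SimpleGraph V)
    [DecidableRel G.Adj] (he : G.edgeFinset.Nonempty) (hδ : 1 ≤ G.minDegree)
    {α : ℝ} (hα : 0 < α) :
    (SDD G α = 2 * (G.minDegree : ℝ) ^ (2 * α) * M2 G (-α) ↔
      ∃ k, G.IsRegularOfDegree k) ∧
    (SDD G α = 2 * (G.maxDegree : ℝ) ^ (2 * α) * M2 G (-α) ↔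
      ∃ k, G.IsRegularOfDegree k) := by
  -- basic degree facts
  have hd1 : ∀ v : V, 1 ≤ G.degree v := fun v => hδ.trans (G.minDegree_le_degree v)
  have hdpos : ∀ v : V, (0:ℝ) < (G.degree v : ℝ) := fun v => by
    exact_mod_cast Nat.lt_of_lt_of_le Nat.zero_lt_one (hd1 v)
  have hx : ∀ v : V, (0:ℝ) < (G.degree v : ℝ) ^ α := fun v => rpow_pos_of_pos (hdpos v) α
  have hsq : ∀ v : V, ((G.degree v : ℝ) ^ α) ^ 2 = (G.degree v : ℝ) ^ (2*α) := by
    intro v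
    rw [← Real.rpow_natCast ((G.degree v : ℝ) ^ α) 2, ← Real.rpow_mul (hdpos v).le]
    norm_num [mul_comm]
  have hmono : ∀ a b : ℕ, a ≤ b → (a:ℝ) ^ (2*α) ≤ (b:ℝ) ^ (2*α) := fun a b h =>
    Real.rpow_le_rpow (Nat.cast_nonneg a) (by exact_mod_cast h) (by positivity)
  have hinj : ∀ a b : ℕ, a ≤ b → (a:ℝ) ^ (2*α) = (b:ℝ) ^ (2*α) → a = b := by
    intro a b h heq
    by_contra hne
    have hlt : (a:ℝ) < (b:ℝ) := by exact_mod_cast lt_of_le_of_ne h hne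
    exact absurd heq
      (ne_of_lt (Real.rpow_lt_rpow (Nat.cast_nonneg a) hlt (by positivity)))
  -- rewrite the RHS as an edge sum
  have hM2 : ∀ c : ℝ, 2 * c ^ (2*α) * M2 G (-α) =
      ∑ e ∈ G.edgeFinset, Sym2.lift
        ⟨fun u v => 2 * c ^ (2*α) / ((G.degree u : ℝ) ^ α * (G.degree v : ℝ) ^ α),
         fun u v => by dsimp only; rw [mul_comm ((G.degree u : ℝ) ^ α)]⟩ e := by
    intro c
    rw [M2, Finset.mul_sum]
    refine Finset.sum_congr rfl fun e he' => ?_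
    induction e using Sym2.ind with
    | _ u v =>
      simp only [Sym2.lift_mk]
      rw [Real.rpow_neg (by positivity), Real.mul_rpow (hdpos u).le (hdpos v).le]
      rw [eq_div_iff (mul_pos (hx u) (hx v)).ne']
      have h1 := (hx u).ne'
      have h2 := (hx v).ne'
      field_simp
  have hsq' : ∀ d : ℝ, 0 < d → (d ^ α) ^ 2 = d ^ (2*α) := by
    intro d hd
    rw [← Real.rpow_natCast (d ^ α) 2, ← Real.rpow_mul hd.le]
    norm_num [mul_comm]
  -- pointwise inequalities
  have hminle : ∀ e ∈ G.edgeFinset,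
      Sym2.lift
        ⟨fun u v => 2 * (G.minDegree:ℝ) ^ (2*α) / ((G.degree u : ℝ) ^ α * (G.degree v : ℝ) ^ α),
         fun u v => by dsimp only; rw [mul_comm ((G.degree u : ℝ) ^ α)]⟩ e ≤
      Sym2.lift
        ⟨fun u v => (G.degree u : ℝ) ^ α / (G.degree v : ℝ) ^ α +
                    (G.degree v : ℝ) ^ α / (G.degree u : ℝ) ^ α,
         fun u v => by ring⟩ e := by
    intro e he'
    induction e using Sym2.ind with
    | _ u v =>
      simp only [Sym2.lift_mk]
      exact (keymin _ _ _ (hx u) (hx v)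
        (by rw [hsq]; exact hmono _ _ (G.minDegree_le_degree u))
        (by rw [hsq]; exact hmono _ _ (G.minDegree_le_degree v))).1
  have hmaxle : ∀ e ∈ G.edgeFinset,
      Sym2.lift
        ⟨fun u v => (G.degree u : ℝ) ^ α / (G.degree v : ℝ) ^ α +
                    (G.degree v : ℝ) ^ α / (G.degree u : ℝ) ^ α,
         fun u v => by ring⟩ e ≤
      Sym2.lift
        ⟨fun u v => 2 * (G.maxDegree:ℝ) ^ (2*α) / ((G.degree u : ℝ) ^ α * (G.degree v : ℝ) ^ α),
         fun u v => by dsimp only; rw [mul_comm ((G.degree u : ℝ) ^ α)]⟩ e := by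
    intro e he'
    induction e using Sym2.ind with
    | _ u v =>
      simp only [Sym2.lift_mk]
      exact (keymax _ _ _ (hx u) (hx v)
        (by rw [hsq]; exact hmono _ _ (G.degree_le_maxDegree u))
        (by rw [hsq]; exact hmono _ _ (G.degree_le_maxDegree v))).1
  -- regular implies pointwise equality
  have hregpt : ∀ (k : ℕ) (c : ℕ), G.IsRegularOfDegree k → c = k → ∀ e ∈ G.edgeFinset,
      Sym2.lift
        ⟨fun u v => (G.degree u : ℝ) ^ α / (G.degree v : ℝ) ^ α +
                    (G.degree v : ℝ) ^ α / (G.degree u : ℝ) ^ α,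
         fun u v => by ring⟩ e =
      Sym2.lift
        ⟨fun u v => 2 * (c:ℝ) ^ (2*α) / ((G.degree u : ℝ) ^ α * (G.degree v : ℝ) ^ α),
         fun u v => by dsimp only; rw [mul_comm ((G.degree u : ℝ) ^ α)]⟩ e := by
    intro k c hk hck e he'
    induction e using Sym2.ind with
    | _ u v =>
      have hkpos : (0:ℝ) < (k:ℝ) := by
        have := hd1 u; rw [hk u] at this; exact_mod_cast Nat.lt_of_lt_of_le Nat.zero_lt_one this
      have hxk : (0:ℝ) < (k:ℝ) ^ α := rpow_pos_of_pos hkpos α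
      simp only [Sym2.lift_mk, hk u, hk v, hck]
      rw [div_self hxk.ne', ← sq, hsq' _ hkpos, mul_div_assoc,
        div_self (by positivity : ((k:ℝ) ^ (2*α)) ≠ 0), mul_one]
      norm_num
  -- from pointwise equality (min) to regularity
  have hminreg : (∀ e ∈ G.edgeFinset,
      Sym2.lift
        ⟨fun u v => 2 * (G.minDegree:ℝ) ^ (2*α) / ((G.degree u : ℝ) ^ α * (G.degree v : ℝ) ^ α),
         fun u v => by dsimp only; rw [mul_comm ((G.degree u : ℝ) ^ α)]⟩ e =
      Sym2.lift
        ⟨fun u v => (G.degree u : ℝ) ^ α / (G.degree v : ℝ) ^ α +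
                    (G.degree v : ℝ) ^ α / (G.degree u : ℝ) ^ α,
         fun u v => by ring⟩ e) → G.IsRegularOfDegree G.minDegree := by
    intro h v
    obtain ⟨w, hw⟩ := (G.degree_pos_iff_exists_adj v).mp (hd1 v)
    have hmem : s(v,w) ∈ G.edgeFinset := by
      rw [SimpleGraph.mem_edgeFinset]; exact hw
    have h2 := h _ hmem
    simp only [Sym2.lift_mk] at h2
    have h3 := ((keymin _ _ _ (hx v) (hx w)
        (by rw [hsq]; exact hmono _ _ (G.minDegree_le_degree v))
        (by rw [hsq]; exact hmono _ _ (G.minDegree_le_degree w))).2.mp h2.symm).1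
    rw [hsq] at h3
    exact (hinj _ _ (G.minDegree_le_degree v) h3.symm).symm
  have hmaxreg : (∀ e ∈ G.edgeFinset,
      Sym2.lift
        ⟨fun u v => (G.degree u : ℝ) ^ α / (G.degree v : ℝ) ^ α +
                    (G.degree v : ℝ) ^ α / (G.degree u : ℝ) ^ α,
         fun u v => by ring⟩ e =
      Sym2.lift
        ⟨fun u v => 2 * (G.maxDegree:ℝ) ^ (2*α) / ((G.degree u : ℝ) ^ α * (G.degree v : ℝ) ^ α),
         fun u v => by dsimp only; rw [mul_comm ((G.degree u : ℝ) ^ α)]⟩ e) →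
      G.IsRegularOfDegree G.maxDegree := by
    intro h v
    obtain ⟨w, hw⟩ := (G.degree_pos_iff_exists_adj v).mp (hd1 v)
    have hmem : s(v,w) ∈ G.edgeFinset := by
      rw [SimpleGraph.mem_edgeFinset]; exact hw
    have h2 := h _ hmem
    simp only [Sym2.lift_mk] at h2
    have h3 := ((keymax _ _ _ (hx v) (hx w)
        (by rw [hsq]; exact hmono _ _ (G.degree_le_maxDegree v))
        (by rw [hsq]; exact hmono _ _ (G.degree_le_maxDegree w))).2.mp h2).1
    rw [hsq] at h3
    exact hinj _ _ (G.degree_le_maxDegree v) h3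
  have hV : Nonempty V := by
    obtain ⟨e0, -⟩ := he
    induction e0 using Sym2.ind with
    | _ u v => exact ⟨u⟩
  haveI := hV
  constructor
  · rw [SDD, hM2 ((G.minDegree : ℕ) : ℝ)]
    constructor
    · intro h
      exact ⟨G.minDegree, hminreg fun e he' => ((Finset.sum_eq_sum_iff_of_le hminle).mp h.symm e he')⟩
    · rintro ⟨k, hk⟩
      have hδk : G.minDegree = k := by
        obtain ⟨u⟩ := hV
        exact le_antisymm ((G.minDegree_le_degree u).trans_eq (hk u))
          (G.le_minDegree_of_forall_le_degree k fun v => (hk v).ge)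
      exact Finset.sum_congr rfl (hregpt k G.minDegree hk hδk)
  · rw [SDD, hM2 ((G.maxDegree : ℕ) : ℝ)]
    constructor
    · intro h
      exact ⟨G.maxDegree, hmaxreg fun e he' => ((Finset.sum_eq_sum_iff_of_le hmaxle).mp h e he')⟩
    · rintro ⟨k, hk⟩
      have hΔk : G.maxDegree = k := by
        obtain ⟨u⟩ := hV
        exact le_antisymm (G.maxDegree_le_of_forall_degree_le k fun v => (hk v).le)
          ((hk u).symm.trans_le (G.degree_le_maxDegree u))
      exact Finset.sum_congr rfl (hregpt k G.maxDegree hk hΔk)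
end

section
/- Let G be a finite simple graph with at least one edge, no isolated vertices, minimum degree δ and maximum degree Δ, and let α > 0 be real. Then equality SDD_α(G) = Δ^{-2α} M1^{2α+1}(G) holds if and only if G is regular, and equality SDD_α(G) = δ^{-2α} M1^{2α+1}(G) holds if and only if G is regular. -/
open Real Finset

/-!
With `x = d_u ^ α` and `y = d_v ^ α`, the SDD weight of an edge `uv` is `(x² + y²) / (x y)`, and the
weighted handshake lemma `∑ᵤ d_u ^ (2α + 1) = ∑_{uv ∈ E} (x² + y²)` turns `c ^ (-2α) M1^(2α+1)` into
the edge sum of `(x² + y²) / c ^ (2α)`. Edge by edge the two weights compare as `d_u d_v` and `c²`.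
For `c = Δ` (resp. `c = δ`) every edge has `d_u d_v ≤ c²` (resp. `≥`), so the sums agree only if
`d_u d_v = c²` on every edge, i.e. both ends have degree `c`; without isolated vertices this is
`c`-regularity.
-/

namespace SimpleGraph

variable {V : Type*} [Fintype V] (G : SimpleGraph V) [DecidableRel G.Adj]

theorem sum_dart_fst {M : Type*} [AddCommMonoid M] (f : V → M) :
    ∑ d : G.Dart, f d.fst = ∑ v, G.degree v • f v := by
  classical
  rw [← sum_fiberwise univ (fun d : G.Dart => d.fst)]
  refine sum_congr rfl fun v _ => ?_
  rw [sum_congr rfl fun d hd => by rw [(mem_filter.1 hd).2], sum_const]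
  congr 1
  convert G.dart_fst_fiber_card_eq_degree v

theorem sum_dart_fst_eq_sum_edgeFinset {M : Type*} [AddCommMonoid M] (f : V → M) :
    ∑ d : G.Dart, f d.fst =
      ∑ e ∈ G.edgeFinset, Sym2.lift ⟨fun u v => f u + f v, fun _ _ => add_comm _ _⟩ e := by
  classical
  rw [← sum_fiberwise_of_maps_to (fun d _ => mem_edgeFinset.2 d.edge_mem)]
  refine sum_congr rfl fun e he => ?_
  induction e using Sym2.ind with
  | _ u v =>
    let d : G.Dart := ⟨(u, v), mem_edgeFinset.1 he⟩
    have hfiber : ({d' | d'.edge = s(u, v)} : Finset G.Dart) = {d, d.symm} := d.edge_fiber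
    rw [hfiber, sum_pair d.symm_ne.symm, Sym2.lift_mk]
    rfl

theorem sum_edgeFinset_eq_iff_of_le {M : Type*} [AddCommMonoid M] [PartialOrder M]
    [IsOrderedCancelAddMonoid M] {F H : Sym2 V → M}
    (h : ∀ u v, G.Adj u v → F s(u, v) ≤ H s(u, v)) :
    ∑ e ∈ G.edgeFinset, F e = ∑ e ∈ G.edgeFinset, H e ↔
      ∀ u v, G.Adj u v → F s(u, v) = H s(u, v) := by
  have forall_edge {P : Sym2 V → Prop} :
      (∀ e ∈ G.edgeFinset, P e) ↔ ∀ u v, G.Adj u v → P s(u, v) :=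
    ⟨fun hP u v huv => hP _ (mem_edgeFinset.2 huv),
      fun hP e => Sym2.ind (fun u v huv => hP u v (mem_edgeFinset.1 huv)) e⟩
  rw [sum_eq_sum_iff_of_le (forall_edge.2 h), forall_edge]

theorem isRegularOfDegree_iff_forall_adj_degree_mul_degree_eq_sq (hpos : ∀ v, 0 < G.degree v)
    {c : ℕ} (hc : (∀ v, G.degree v ≤ c) ∨ ∀ v, c ≤ G.degree v) :
    G.IsRegularOfDegree c ↔ ∀ u v, G.Adj u v → G.degree u * G.degree v = c ^ 2 := by
  refine ⟨fun hreg u v _ => by rw [hreg u, hreg v, sq], fun h u => ?_⟩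
  obtain ⟨v, huv⟩ := (G.degree_pos_iff_exists_adj u).1 (hpos u)
  have := h u v huv
  rcases hc with hc | hc <;> nlinarith [hc u, hc v, hpos v]

end SimpleGraph

open SimpleGraph

theorem m1_add_one_eq_sum_edgeFinset {V : Type*} [Fintype V] (G : SimpleGraph V)
    [DecidableRel G.Adj] {β : ℝ} (hβ : β + 1 ≠ 0) :
    M1 G (β + 1) = ∑ e ∈ G.edgeFinset,
      Sym2.lift ⟨fun u v => (G.degree u : ℝ) ^ β + (G.degree v : ℝ) ^ β,
        fun _ _ => add_comm _ _⟩ e := by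
  rw [← sum_dart_fst_eq_sum_edgeFinset, sum_dart_fst G fun v => (G.degree v : ℝ) ^ β, M1]
  refine sum_congr rfl fun v _ => ?_
  rw [rpow_add_one' (Nat.cast_nonneg _) hβ, nsmul_eq_mul, mul_comm]

theorem rpow_div_add_rpow_div_eq {x y : ℝ} (hx : 0 < x) (hy : 0 < y) (α : ℝ) :
    x ^ α / y ^ α + y ^ α / x ^ α = (x * y) ^ (-α) * (x ^ (2 * α) + y ^ (2 * α)) := by
  have hsq {t : ℝ} (ht : 0 < t) : t ^ (2 * α) = (t ^ α) ^ 2 := by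
    rw [mul_comm, rpow_mul ht.le, rpow_two]
  have := rpow_pos_of_pos hx α
  have := rpow_pos_of_pos hy α
  rw [rpow_neg (mul_pos hx hy).le, mul_rpow hx.le hy.le, hsq hx, hsq hy]
  field_simp

theorem rpow_neg_two_mul {c : ℝ} (hc : 0 ≤ c) (α : ℝ) : c ^ (-(2 * α)) = (c ^ 2) ^ (-α) := by
  rw [← rpow_natCast_mul hc, Nat.cast_ofNat, mul_neg]

section EdgeWeights

variable {x y c α : ℝ}

theorem rpow_neg_two_mul_mul_add_le_iff (hx : 0 < x) (hy : 0 < y) (hc : 0 < c) (hα : 0 < α) :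
    c ^ (-(2 * α)) * (x ^ (2 * α) + y ^ (2 * α)) ≤ x ^ α / y ^ α + y ^ α / x ^ α ↔
      x * y ≤ c ^ 2 := by
  rw [rpow_div_add_rpow_div_eq hx hy, rpow_neg_two_mul hc.le, mul_le_mul_iff_left₀ (by positivity),
    rpow_le_rpow_iff_of_neg (by positivity) (by positivity) (by linarith)]

theorem div_add_div_le_rpow_neg_two_mul_mul_add_iff (hx : 0 < x) (hy : 0 < y) (hc : 0 < c)
    (hα : 0 < α) :
    x ^ α / y ^ α + y ^ α / x ^ α ≤ c ^ (-(2 * α)) * (x ^ (2 * α) + y ^ (2 * α)) ↔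
      c ^ 2 ≤ x * y := by
  rw [rpow_div_add_rpow_div_eq hx hy, rpow_neg_two_mul hc.le, mul_le_mul_iff_left₀ (by positivity),
    rpow_le_rpow_iff_of_neg (by positivity) (by positivity) (by linarith)]

theorem rpow_neg_two_mul_mul_add_eq_iff (hx : 0 < x) (hy : 0 < y) (hc : 0 < c) (hα : 0 < α) :
    c ^ (-(2 * α)) * (x ^ (2 * α) + y ^ (2 * α)) = x ^ α / y ^ α + y ^ α / x ^ α ↔
      x * y = c ^ 2 := by
  rw [rpow_div_add_rpow_div_eq hx hy, rpow_neg_two_mul hc.le, mul_left_inj' (by positivity),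
    rpow_left_inj (by positivity) (by positivity) (by linarith), eq_comm]

end EdgeWeights

theorem sdd_eq_rpow_neg_mul_m1_iff {V : Type*} [Fintype V] (G : SimpleGraph V)
    [DecidableRel G.Adj] (hpos : ∀ v, 0 < G.degree v) {α : ℝ} (hα : 0 < α) {c : ℕ}
    (hc0 : 0 < c) (hc : (∀ v, G.degree v ≤ c) ∨ ∀ v, c ≤ G.degree v) :
    SDD G α = (c : ℝ) ^ (-(2 * α)) * M1 G (2 * α + 1) ↔ G.IsRegularOfDegree c := by
  have hD (v : V) : (0 : ℝ) < G.degree v := Nat.cast_pos.2 (hpos v)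
  have hc0' : (0 : ℝ) < c := Nat.cast_pos.2 hc0
  rw [SDD, m1_add_one_eq_sum_edgeFinset G (by linarith : 2 * α + 1 ≠ 0), mul_sum,
    G.isRegularOfDegree_iff_forall_adj_degree_mul_degree_eq_sq hpos hc, eq_comm]
  rcases hc with hc | hc
  · rw [sum_edgeFinset_eq_iff_of_le]
    · simp only [Sym2.lift_mk, rpow_neg_two_mul_mul_add_eq_iff (hD _) (hD _) hc0' hα]
      norm_cast
    · intro u v _
      rw [Sym2.lift_mk, Sym2.lift_mk, rpow_neg_two_mul_mul_add_le_iff (hD u) (hD v) hc0' hα]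
      exact_mod_cast (Nat.mul_le_mul (hc u) (hc v)).trans_eq (sq c).symm
  · rw [eq_comm, sum_edgeFinset_eq_iff_of_le]
    · simp only [Sym2.lift_mk, eq_comm (b := (_ : ℝ) ^ (-(2 * α)) * _),
        rpow_neg_two_mul_mul_add_eq_iff (hD _) (hD _) hc0' hα]
      norm_cast
    · intro u v _
      rw [Sym2.lift_mk, Sym2.lift_mk,
        div_add_div_le_rpow_neg_two_mul_mul_add_iff (hD u) (hD v) hc0' hα]
      exact_mod_cast (sq c).trans_le (Nat.mul_le_mul (hc u) (hc v))

theorem sdd_m1_eq_iff_regular_general {V : Type*} [Fintype V] (G : SimpleGraph V)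
    [DecidableRel G.Adj] (hδ : 1 ≤ G.minDegree)
    {α : ℝ} (hα : 0 < α) :
    (SDD G α = (G.maxDegree : ℝ) ^ (-(2 * α)) * M1 G (2 * α + 1) ↔
      ∃ k, G.IsRegularOfDegree k) ∧
    (SDD G α = (G.minDegree : ℝ) ^ (-(2 * α)) * M1 G (2 * α + 1) ↔
      ∃ k, G.IsRegularOfDegree k) := by
  have hpos (v : V) : 0 < G.degree v := hδ.trans (G.minDegree_le_degree v)
  have : Nonempty V := by
    by_contra! h
    simp [minDegree_of_subsingleton] at hδ
  constructor
  · rw [sdd_eq_rpow_neg_mul_m1_iff G hpos hα (hδ.trans G.minDegree_le_maxDegree)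
      (.inl G.degree_le_maxDegree)]
    exact ⟨fun h => ⟨_, h⟩, fun ⟨k, hk⟩ => hk.maxDegree_eq ▸ hk⟩
  · rw [sdd_eq_rpow_neg_mul_m1_iff G hpos hα hδ (.inr G.minDegree_le_degree)]
    exact ⟨fun h => ⟨_, h⟩, fun ⟨k, hk⟩ => hk.minDegree_eq ▸ hk⟩

theorem sdd_m1_eq_iff_regular {V : Type*} [Fintype V] (G : SimpleGraph V)
    [DecidableRel G.Adj] (he : G.edgeFinset.Nonempty) (hδ : 1 ≤ G.minDegree)
    {α : ℝ} (hα : 0 < α) :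
    (SDD G α = (G.maxDegree : ℝ) ^ (-(2 * α)) * M1 G (2 * α + 1) ↔
      ∃ k, G.IsRegularOfDegree k) ∧
    (SDD G α = (G.minDegree : ℝ) ^ (-(2 * α)) * M1 G (2 * α + 1) ↔
      ∃ k, G.IsRegularOfDegree k) :=
  sdd_m1_eq_iff_regular_general G hδ hα
end

section
/- Let G be a finite simple graph with m edges and minimum degree δ ≥ 1, and let α > 0 be real. Then SDD_α(G) · ISD_{-α}(G) ≥ δ^α m², i.e., SDD_α(G) ≥ δ^α m² / ISD_{-α}(G) whenever m ≥ 1. -/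
open Real Finset

noncomputable def ISD {V : Type*} [Fintype V] (G : SimpleGraph V) [DecidableRel G.Adj]
    (a : ℝ) : ℝ :=
  ∑ e ∈ G.edgeFinset, Sym2.lift
    ⟨fun u v => 1 / ((G.degree u : ℝ) ^ a + (G.degree v : ℝ) ^ a),
     fun u v => by dsimp only; rw [add_comm]⟩ e

/-!
Cauchy–Schwarz bounds `SDD_α · ISD_{-α}` below by `m²` times the least edgewise product. Writing
`x = d_u^α`, `y = d_v^α`, that product is `(x/y + y/x) / (x⁻¹ + y⁻¹) = (x² + y²) / (x + y)`,
which is at least `(x + y) / 2 ≥ δ^α`.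
-/

theorem Finset.mul_card_sq_le_sum_mul_sum {ι : Type*} (s : Finset ι) {c : ℝ} {f g : ι → ℝ}
    (hc : 0 ≤ c) (hf : ∀ i ∈ s, 0 ≤ f i) (hg : ∀ i ∈ s, 0 ≤ g i)
    (hfg : ∀ i ∈ s, c ≤ f i * g i) :
    c * (#s : ℝ) ^ 2 ≤ (∑ i ∈ s, f i) * ∑ i ∈ s, g i := by
  have := sum_sq_le_sum_mul_sum_of_sq_le_mul s (r := fun _ => √c) hf hg
    fun i hi => (sq_sqrt hc).trans_le (hfg i hi)
  simpa [mul_pow, sq_sqrt hc, mul_comm] using this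

theorem le_div_add_div_mul_one_div_inv_add_inv {d x y : ℝ} (hd : 0 < d) (hx : d ≤ x)
    (hy : d ≤ y) : d ≤ (x / y + y / x) * (1 / (x⁻¹ + y⁻¹)) := by
  have hx0 : 0 < x := hd.trans_le hx
  have hy0 : 0 < y := hd.trans_le hy
  have hxy : (x / y + y / x) * (1 / (x⁻¹ + y⁻¹)) = (x ^ 2 + y ^ 2) / (x + y) := by
    field_simp
    ring
  rw [hxy, le_div_iff₀ (by positivity)]
  nlinarith [mul_nonneg hx0.le (sub_nonneg.2 hx), mul_nonneg hy0.le (sub_nonneg.2 hy)]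

namespace SimpleGraph

variable {V : Type*} [Fintype V] (G : SimpleGraph V) [DecidableRel G.Adj]

theorem minDegree_rpow_le_sdd_term_mul_isd_term (hδ : 1 ≤ G.minDegree) {α : ℝ} (hα : 0 ≤ α)
    (u v : V) :
    (G.minDegree : ℝ) ^ α ≤
      ((G.degree u : ℝ) ^ α / (G.degree v : ℝ) ^ α + (G.degree v : ℝ) ^ α / (G.degree u : ℝ) ^ α)
        * (1 / ((G.degree u : ℝ) ^ (-α) + (G.degree v : ℝ) ^ (-α))) := by
  have hδ0 : (0 : ℝ) < G.minDegree := by exact_mod_cast hδ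
  have hu : (G.minDegree : ℝ) ≤ G.degree u := by exact_mod_cast G.minDegree_le_degree u
  have hv : (G.minDegree : ℝ) ≤ G.degree v := by exact_mod_cast G.minDegree_le_degree v
  rw [rpow_neg (hδ0.le.trans hu), rpow_neg (hδ0.le.trans hv)]
  exact le_div_add_div_mul_one_div_inv_add_inv (rpow_pos_of_pos hδ0 α)
    (rpow_le_rpow hδ0.le hu hα) (rpow_le_rpow hδ0.le hv hα)

theorem sdd_nonneg (α : ℝ) : 0 ≤ SDD G α :=
  sum_nonneg fun e _ => Sym2.ind (fun u v => by simp only [Sym2.lift_mk]; positivity) e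

theorem isd_nonneg (a : ℝ) : 0 ≤ ISD G a :=
  sum_nonneg fun e _ => Sym2.ind (fun u v => by simp only [Sym2.lift_mk]; positivity) e

end SimpleGraph

theorem sdd_isd_inequality {V : Type*} [Fintype V] (G : SimpleGraph V) [DecidableRel G.Adj]
    (hδ : 1 ≤ G.minDegree) {α : ℝ} (hα : 0 < α) :
    (G.minDegree : ℝ) ^ α * (G.edgeFinset.card : ℝ) ^ 2 ≤ SDD G α * ISD G (-α) ∧
    (1 ≤ G.edgeFinset.card →
      (G.minDegree : ℝ) ^ α * (G.edgeFinset.card : ℝ) ^ 2 / ISD G (-α) ≤ SDD G α) := by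
  have hmain : (G.minDegree : ℝ) ^ α * (G.edgeFinset.card : ℝ) ^ 2 ≤ SDD G α * ISD G (-α) := by
    refine mul_card_sq_le_sum_mul_sum _ (by positivity) ?_ ?_ ?_ <;>
      refine fun e _ => Sym2.ind (fun u v => ?_) e <;> simp only [Sym2.lift_mk]
    · positivity
    · positivity
    · exact G.minDegree_rpow_le_sdd_term_mul_isd_term hδ hα.le u v
  exact ⟨hmain, fun _ => div_le_of_le_mul₀ (G.isd_nonneg _) (G.sdd_nonneg _) hmain⟩
end

section
/- Let G be a finite simple graph with m ≥ 1 edges, no isolated vertices and minimum degree δ, and let α > 0 be real. Then SDD_α(G) = δ^α m² / ISD_{-α}(G) if and only if G is regular. -/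
open Real Finset

private lemma aux_two_le (a b : ℝ) (ha : 0 < a) (hb : 0 < b) : 2 ≤ a / b + b / a := by
  rw [div_add_div _ _ hb.ne' ha.ne', le_div_iff₀ (by positivity)]
  nlinarith [sq_nonneg (a - b)]

theorem sdd_isd_eq_iff_regular {V : Type*} [Fintype V] (G : SimpleGraph V)
    [DecidableRel G.Adj] (hm : 1 ≤ G.edgeFinset.card) (hG : ∀ v : V, 0 < G.degree v)
    {α : ℝ} (hα : 0 < α) :
    SDD G α = (G.minDegree : ℝ) ^ α * (G.edgeFinset.card : ℝ) ^ 2 / ISD G (-α) ↔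
      ∃ k, G.IsRegularOfDegree k := by
  classical
  obtain ⟨e0, he0⟩ := Finset.card_pos.mp hm
  have hVne : Nonempty V := by
    induction e0 using Sym2.ind with
    | _ u v => exact ⟨u⟩
  obtain ⟨v0, hv0⟩ := G.exists_minimal_degree_vertex
  have hδ : 0 < G.minDegree := hv0 ▸ hG v0
  have hδR : (0:ℝ) < (G.minDegree : ℝ) := by exact_mod_cast hδ
  set m := G.edgeFinset.card with hmdef
  have hmR : (1:ℝ) ≤ (m:ℝ) := by exact_mod_cast hm
  set c : ℝ := (G.minDegree : ℝ) ^ α with hcdef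
  have hc : 0 < c := Real.rpow_pos_of_pos hδR α
  have hdeg : ∀ u : V, (0:ℝ) < (G.degree u : ℝ) := fun u => by exact_mod_cast hG u
  have hdge : ∀ u : V, (G.minDegree : ℝ) ≤ (G.degree u : ℝ) := fun u => by
    exact_mod_cast G.minDegree_le_degree u
  have hx_le : ∀ u : V, (G.degree u : ℝ) ^ (-α) ≤ c⁻¹ := fun u => by
    rw [hcdef, ← Real.rpow_neg hδR.le]
    exact Real.rpow_le_rpow_of_nonpos hδR (hdge u) (by linarith)
  have hx_pos : ∀ u : V, (0:ℝ) < (G.degree u : ℝ) ^ (-α) := fun u =>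
    Real.rpow_pos_of_pos (hdeg u) _
  -- per-edge lower bound for ISD terms
  have hISDterm : ∀ e ∈ G.edgeFinset, c / 2 ≤ Sym2.lift
      ⟨fun u v => 1 / ((G.degree u : ℝ) ^ (-α) + (G.degree v : ℝ) ^ (-α)),
       fun u v => by dsimp only; rw [add_comm]⟩ e := by
    intro e _
    induction e using Sym2.ind with
    | _ u v =>
      rw [Sym2.lift_mk]
      have h1 : (G.degree u : ℝ) ^ (-α) + (G.degree v : ℝ) ^ (-α) ≤ 2 * c⁻¹ := by
        have := hx_le u; have := hx_le v; linarith
      have h2 : (0:ℝ) < (G.degree u : ℝ) ^ (-α) + (G.degree v : ℝ) ^ (-α) := by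
        have := hx_pos u; have := hx_pos v; linarith
      rw [div_le_div_iff₀ (by norm_num) h2]
      have h3 : c * (2 * c⁻¹) = 2 := by field_simp
      nlinarith
  have hISD_ge : (m:ℝ) * c / 2 ≤ ISD G (-α) := by
    rw [ISD]
    calc (m:ℝ) * c / 2 = ∑ _e ∈ G.edgeFinset, (c/2) := by
          rw [Finset.sum_const, nsmul_eq_mul]; ring
      _ ≤ _ := Finset.sum_le_sum hISDterm
  have hISD_pos : 0 < ISD G (-α) := lt_of_lt_of_le (by nlinarith) hISD_ge
  have hSDD_ge : 2 * (m:ℝ) ≤ SDD G α := by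
    rw [SDD]
    calc 2 * (m:ℝ) = ∑ _e ∈ G.edgeFinset, (2:ℝ) := by
          rw [Finset.sum_const, nsmul_eq_mul]; ring
      _ ≤ _ := by
          refine Finset.sum_le_sum ?_
          intro e _
          induction e using Sym2.ind with
          | _ u v =>
            rw [Sym2.lift_mk]
            exact aux_two_le _ _ (Real.rpow_pos_of_pos (hdeg u) α)
              (Real.rpow_pos_of_pos (hdeg v) α)
  constructor
  · intro h
    have hprod : SDD G α * ISD G (-α) = c * (m:ℝ)^2 := by
      rw [h, div_mul_cancel₀ _ hISD_pos.ne']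
    have hISD_eq : ISD G (-α) = (m:ℝ) * c / 2 := by
      have hle : ISD G (-α) ≤ (m:ℝ) * c / 2 := by
        nlinarith [mul_le_mul_of_nonneg_right hSDD_ge hISD_pos.le]
      linarith
    have hsum : (∑ _e ∈ G.edgeFinset, (c/2)) = ISD G (-α) := by
      rw [hISD_eq, Finset.sum_const, nsmul_eq_mul]; ring
    rw [ISD] at hsum
    have hperedge := (Finset.sum_eq_sum_iff_of_le hISDterm).mp hsum
    refine ⟨G.minDegree, fun v => ?_⟩
    have hdv : 0 < (G.neighborFinset v).card := by
      rw [G.card_neighborFinset_eq_degree]; exact hG v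
    obtain ⟨w, hw⟩ := Finset.card_pos.mp hdv
    have hadj : G.Adj v w := by rwa [SimpleGraph.mem_neighborFinset] at hw
    have hmem : s(v,w) ∈ G.edgeFinset := by
      rw [SimpleGraph.mem_edgeFinset]; exact hadj
    have heq : c / 2 = 1 / ((G.degree v : ℝ) ^ (-α) + (G.degree w : ℝ) ^ (-α)) :=
      hperedge _ hmem
    set x := (G.degree v : ℝ) ^ (-α) with hxdef
    set y := (G.degree w : ℝ) ^ (-α) with hydef
    have h2 : (0:ℝ) < x + y := by have := hx_pos v; have := hx_pos w; linarith
    rw [div_eq_div_iff (by norm_num) h2.ne'] at heq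
    -- heq : c * (x + y) = 2 * 1
    have hcc : c * c⁻¹ = 1 := mul_inv_cancel₀ hc.ne'
    have hxge : c⁻¹ ≤ x := by nlinarith [hx_le w, hc]
    by_contra hne
    have hlt : G.minDegree < G.degree v := lt_of_le_of_ne (G.minDegree_le_degree v)
      (fun hh => hne hh.symm)
    have hltR : (G.minDegree : ℝ) < (G.degree v : ℝ) := by exact_mod_cast hlt
    have : x < c⁻¹ := by
      rw [hxdef, hcdef, ← Real.rpow_neg hδR.le]
      exact Real.rpow_lt_rpow_of_neg hδR hltR (by linarith)
    linarith
  · rintro ⟨k, hk⟩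
    have hδk : G.minDegree = k := hv0 ▸ hk v0
    have hkR : (0:ℝ) < (k:ℝ) := by
      have := hG v0; rw [hk v0] at this; exact_mod_cast this
    have hck : c = (k:ℝ) ^ α := by rw [hcdef, hδk]
    have hcne : ((k:ℝ) ^ α) ≠ 0 := (Real.rpow_pos_of_pos hkR α).ne'
    have hSDD : SDD G α = 2 * (m:ℝ) := by
      rw [SDD]
      have hterm : ∀ e ∈ G.edgeFinset, Sym2.lift
          ⟨fun u v => (G.degree u : ℝ) ^ α / (G.degree v : ℝ) ^ α +
              (G.degree v : ℝ) ^ α / (G.degree u : ℝ) ^ α,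
           fun u v => by ring⟩ e = 2 := by
        intro e _
        induction e using Sym2.ind with
        | _ u v =>
          show (G.degree u : ℝ) ^ α / (G.degree v : ℝ) ^ α +
              (G.degree v : ℝ) ^ α / (G.degree u : ℝ) ^ α = 2
          rw [hk u, hk v, div_self hcne]
          norm_num
      rw [Finset.sum_congr rfl hterm, Finset.sum_const, nsmul_eq_mul]; ring
    have hISD : ISD G (-α) = (m:ℝ) * (k:ℝ)^α / 2 := by
      rw [ISD]
      have hterm : ∀ e ∈ G.edgeFinset, Sym2.lift
          ⟨fun u v => 1 / ((G.degree u : ℝ) ^ (-α) + (G.degree v : ℝ) ^ (-α)),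
           fun u v => by dsimp only; rw [add_comm]⟩ e = (k:ℝ)^α / 2 := by
        intro e _
        induction e using Sym2.ind with
        | _ u v =>
          show 1 / ((G.degree u : ℝ) ^ (-α) + (G.degree v : ℝ) ^ (-α)) = (k:ℝ)^α / 2
          rw [hk u, hk v, Real.rpow_neg hkR.le, ← two_mul, one_div, mul_inv, inv_inv]
          ring
      rw [Finset.sum_congr rfl hterm, Finset.sum_const, nsmul_eq_mul]; ring
    rw [hSDD, hISD, hck]
    have hm0 : (m:ℝ) ≠ 0 := by linarith
    field_simp
end

section
/- Let G be a finite simple graph with m ≥ 1 edges and minimum degree δ ≥ 1, and let α > 0 be real. Then SDD_α(G) ≥ 2 δ^{2α} m · (NK*(G))^{-α/m}. -/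
open Real Finset

noncomputable def NKstar {V : Type*} [Fintype V] (G : SimpleGraph V)
    [DecidableRel G.Adj] : ℝ :=
  ∏ u : V, (G.degree u : ℝ) ^ (G.degree u)

/-!
With `a = d_u`, `b = d_v`, each edge term of `SDD_α` is
`(a^{2α} + b^{2α}) / (ab)^α ≥ 2 δ^{2α} (ab)^{-α}`. Summing and applying AM-GM to the `m` numbers
`(d_u d_v)^{-α}` gives `∑ (d_u d_v)^{-α} ≥ m (∏ d_u d_v)^{-α/m}`, and `∏_{uv} d_u d_v = NK*(G)`.
-/

theorem Real.card_mul_prod_rpow_inv_card_le_sum {ι : Type*} (s : Finset ι) (z : ι → ℝ)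
    (hz : ∀ i ∈ s, 0 ≤ z i) :
    #s * (∏ i ∈ s, z i) ^ ((#s : ℝ)⁻¹) ≤ ∑ i ∈ s, z i := by
  rcases s.eq_empty_or_nonempty with rfl | hs
  · simp
  have hcard : (0 : ℝ) < #s := by exact_mod_cast hs.card_pos
  have amgm := Real.geom_mean_le_arith_mean_weighted s (fun _ => (#s : ℝ)⁻¹) z
    (fun _ _ => by positivity) (by simp [hcard.ne']) hz
  rw [Real.finsetProd_rpow s z hz, ← Finset.mul_sum] at amgm
  calc #s * (∏ i ∈ s, z i) ^ ((#s : ℝ)⁻¹)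
      ≤ #s * ((#s : ℝ)⁻¹ * ∑ i ∈ s, z i) := by gcongr
    _ = ∑ i ∈ s, z i := by field_simp

theorem two_mul_sq_div_le_div_add_div {d a b : ℝ} (hd : 0 ≤ d) (ha : 0 < a) (hb : 0 < b)
    (hda : d ≤ a) (hdb : d ≤ b) : 2 * d ^ 2 / (a * b) ≤ a / b + b / a := by
  rw [div_add_div _ _ hb.ne' ha.ne', mul_comm b a]
  gcongr
  nlinarith [mul_le_mul hda hda hd ha.le, mul_le_mul hdb hdb hd hb.le]

theorem two_mul_rpow_mul_rpow_neg_le {δ a b α : ℝ} (hδ : 0 ≤ δ) (ha : 0 < a) (hb : 0 < b)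
    (hδa : δ ≤ a) (hδb : δ ≤ b) (hα : 0 ≤ α) :
    2 * δ ^ (2 * α) * (a * b) ^ (-α) ≤ a ^ α / b ^ α + b ^ α / a ^ α := by
  have hsq : δ ^ (2 * α) = (δ ^ α) ^ 2 := by
    rw [mul_comm, ← Real.rpow_mul_natCast hδ]; norm_num
  rw [hsq, Real.rpow_neg (mul_nonneg ha.le hb.le), Real.mul_rpow ha.le hb.le, ← div_eq_mul_inv]
  exact two_mul_sq_div_le_div_add_div (by positivity) (by positivity) (by positivity)
    (by gcongr) (by gcongr)

namespace SimpleGraph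

variable {V : Type*} [Fintype V] (G : SimpleGraph V) [DecidableRel G.Adj]

theorem prod_dart_fst_eq_prod_pow_degree {M : Type*} [CommMonoid M] (f : V → M) :
    ∏ d : G.Dart, f d.fst = ∏ v, f v ^ G.degree v := by
  classical
  rw [← Finset.prod_fiberwise_of_maps_to (g := fun d : G.Dart => d.fst)
    (fun d _ => Finset.mem_univ d.fst)]
  refine Finset.prod_congr rfl fun v _ => ?_
  rw [Finset.prod_congr rfl fun d hd => congrArg f (Finset.mem_filter.mp hd).2,
    Finset.prod_const, G.dart_fst_fiber_card_eq_degree v]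

theorem prod_dart_fst_eq_prod_edgeFinset {M : Type*} [CommMonoid M] (f : V → M) :
    ∏ d : G.Dart, f d.fst =
      ∏ e ∈ G.edgeFinset, Sym2.lift ⟨fun u v => f u * f v, fun _ _ => mul_comm _ _⟩ e := by
  classical
  rw [← Finset.prod_fiberwise_of_maps_to (g := fun d : G.Dart => d.edge) (t := G.edgeFinset)
    (fun d _ => G.mem_edgeFinset.mpr d.edge_mem)]
  refine Finset.prod_congr rfl fun e he => ?_
  induction e using Sym2.ind with
  | _ u v =>
    let d : G.Dart := ⟨(u, v), G.mem_edgeFinset.mp he⟩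
    rw [show s(u, v) = d.edge from rfl, d.edge_fiber, Finset.prod_pair d.symm_ne.symm]
    rfl

theorem prod_pow_degree_eq_prod_edgeFinset {M : Type*} [CommMonoid M] (f : V → M) :
    ∏ v, f v ^ G.degree v =
      ∏ e ∈ G.edgeFinset, Sym2.lift ⟨fun u v => f u * f v, fun _ _ => mul_comm _ _⟩ e := by
  rw [← prod_dart_fst_eq_prod_pow_degree, prod_dart_fst_eq_prod_edgeFinset]

noncomputable def edgeDegreeProd (e : Sym2 V) : ℝ :=
  Sym2.lift ⟨fun u v => (G.degree u : ℝ) * G.degree v, fun _ _ => mul_comm _ _⟩ e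

theorem edgeDegreeProd_nonneg (e : Sym2 V) : 0 ≤ G.edgeDegreeProd e := by
  induction e using Sym2.ind with
  | _ u v => exact mul_nonneg (Nat.cast_nonneg _) (Nat.cast_nonneg _)

theorem NKstar_eq_prod_edgeDegreeProd : NKstar G = ∏ e ∈ G.edgeFinset, G.edgeDegreeProd e :=
  G.prod_pow_degree_eq_prod_edgeFinset fun v => (G.degree v : ℝ)

variable {G} in
theorem Adj.two_mul_minDegree_rpow_mul_edgeDegreeProd_rpow_neg_le {u v : V} (h : G.Adj u v)
    {α : ℝ} (hα : 0 ≤ α) :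
    2 * (G.minDegree : ℝ) ^ (2 * α) * G.edgeDegreeProd s(u, v) ^ (-α) ≤
      (G.degree u : ℝ) ^ α / (G.degree v : ℝ) ^ α +
        (G.degree v : ℝ) ^ α / (G.degree u : ℝ) ^ α :=
  two_mul_rpow_mul_rpow_neg_le (Nat.cast_nonneg _) (mod_cast h.degree_pos_left)
    (mod_cast h.degree_pos_right) (mod_cast G.minDegree_le_degree u)
    (mod_cast G.minDegree_le_degree v) hα

end SimpleGraph

theorem sdd_ge_nk_general {V : Type*} [Fintype V] (G : SimpleGraph V) [DecidableRel G.Adj]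
    {α : ℝ} (hα : 0 < α) :
    2 * (G.minDegree : ℝ) ^ (2 * α) * (G.edgeFinset.card : ℝ) *
      NKstar G ^ (-α / (G.edgeFinset.card : ℝ)) ≤ SDD G α := by
  set δ : ℝ := (G.minDegree : ℝ)
  set m := #G.edgeFinset
  set Z := G.edgeDegreeProd
  have hZ : ∀ e, 0 ≤ Z e := G.edgeDegreeProd_nonneg
  have hNK : NKstar G ^ (-α / m) = (∏ e ∈ G.edgeFinset, Z e ^ (-α)) ^ (m : ℝ)⁻¹ := by
    rw [Real.finsetProd_rpow _ _ fun e _ => hZ e, ← Real.rpow_mul (prod_nonneg fun e _ => hZ e),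
      G.NKstar_eq_prod_edgeDegreeProd, div_eq_mul_inv]
  calc 2 * δ ^ (2 * α) * m * NKstar G ^ (-α / m)
      = 2 * δ ^ (2 * α) * (m * (∏ e ∈ G.edgeFinset, Z e ^ (-α)) ^ (m : ℝ)⁻¹) := by
        rw [hNK]; ring
    _ ≤ 2 * δ ^ (2 * α) * ∑ e ∈ G.edgeFinset, Z e ^ (-α) := by
        gcongr
        exact Real.card_mul_prod_rpow_inv_card_le_sum _ _ fun e _ => rpow_nonneg (hZ e) _
    _ = ∑ e ∈ G.edgeFinset, 2 * δ ^ (2 * α) * Z e ^ (-α) := mul_sum _ _ _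
    _ ≤ SDD G α := sum_le_sum fun e he => by
        induction e using Sym2.ind with
        | _ u v =>
          exact (G.mem_edgeFinset.mp he).two_mul_minDegree_rpow_mul_edgeDegreeProd_rpow_neg_le
            hα.le

theorem sdd_ge_nk {V : Type*} [Fintype V] (G : SimpleGraph V) [DecidableRel G.Adj]
    (hm : 1 ≤ G.edgeFinset.card) (hδ : 1 ≤ G.minDegree) {α : ℝ} (hα : 0 < α) :
    2 * (G.minDegree : ℝ) ^ (2 * α) * (G.edgeFinset.card : ℝ) *
      NKstar G ^ (-α / (G.edgeFinset.card : ℝ)) ≤ SDD G α :=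
  sdd_ge_nk_general G hα
end

section
/- Let G be a finite simple graph with m ≥ 1 edges and minimum degree δ ≥ 1, and let α > 0 be real. Then SDD_α(G) = 2 δ^{2α} m · (NK*(G))^{-α/m} if and only if G is regular. -/
open Real Finset

theorem sdd_nk_eq_iff_regular {V : Type*} [Fintype V] (G : SimpleGraph V)
    [DecidableRel G.Adj] (hm : 1 ≤ G.edgeFinset.card) (hδ : 1 ≤ G.minDegree)
    {α : ℝ} (hα : 0 < α) :
    SDD G α = 2 * (G.minDegree : ℝ) ^ (2 * α) * (G.edgeFinset.card : ℝ) *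
      NKstar G ^ (-α / (G.edgeFinset.card : ℝ)) ↔
    ∃ k, G.IsRegularOfDegree k := by
  classical
  set c := G.edgeFinset.card with hc
  have hcR : (0:ℝ) < (c : ℝ) := by exact_mod_cast hm
  have hδdeg : ∀ v, G.minDegree ≤ G.degree v := fun v => G.minDegree_le_degree v
  have hdegpos : ∀ v, 0 < (G.degree v : ℝ) := fun v => by
    have : (1:ℕ) ≤ G.degree v := hδ.trans (hδdeg v)
    exact_mod_cast lt_of_lt_of_le Nat.zero_lt_one this
  have hδR : (0:ℝ) < (G.minDegree : ℝ) := by exact_mod_cast hδ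
  -- SDD ≥ 2c
  have hSDDge : 2 * (c : ℝ) ≤ SDD G α := by
    have h2 : ∀ e ∈ G.edgeFinset, (2:ℝ) ≤ Sym2.lift
        ⟨fun u v => (G.degree u : ℝ) ^ α / (G.degree v : ℝ) ^ α +
                    (G.degree v : ℝ) ^ α / (G.degree u : ℝ) ^ α,
         fun u v => by ring⟩ e := by
      intro e _
      induction e using Sym2.ind with
      | _ u v =>
        rw [Sym2.lift_mk]
        dsimp only
        have ha : (0:ℝ) < (G.degree u : ℝ) ^ α := rpow_pos_of_pos (hdegpos u) α
        have hb : (0:ℝ) < (G.degree v : ℝ) ^ α := rpow_pos_of_pos (hdegpos v) α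
        rw [div_add_div _ _ (ne_of_gt hb) (ne_of_gt ha), le_div_iff₀ (mul_pos hb ha)]
        nlinarith [sq_nonneg ((G.degree u : ℝ) ^ α - (G.degree v : ℝ) ^ α)]
    calc 2 * (c:ℝ) = ∑ _e ∈ G.edgeFinset, (2:ℝ) := by
          rw [Finset.sum_const, nsmul_eq_mul]; ring
      _ ≤ SDD G α := Finset.sum_le_sum h2
  -- NKstar ≥ δ^(2c)
  have hNKfac : ∀ v, ((G.minDegree : ℝ)) ^ (G.degree v) ≤ ((G.degree v : ℝ)) ^ (G.degree v) :=
    fun v => pow_le_pow_left₀ hδR.le (by exact_mod_cast hδdeg v) _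
  have hNKge : ((G.minDegree : ℝ)) ^ (2 * c) ≤ NKstar G := by
    unfold NKstar
    rw [hc, ← G.sum_degrees_eq_twice_card_edges, ← Finset.prod_pow_eq_pow_sum]
    exact Finset.prod_le_prod (fun v _ => pow_pos hδR _ |>.le) (fun v _ => hNKfac v)
  have hNKpos : 0 < NKstar G := Finset.prod_pos (fun v _ => pow_pos (hdegpos v) _)
  have hexp : ((2 * c : ℕ) : ℝ) * (-α / (c : ℝ)) = -(2 * α) := by
    push_cast
    field_simp
  constructor
  · intro h
    by_contra hreg
    have hne : ∃ v, G.degree v ≠ G.minDegree := by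
      by_contra h'
      push_neg at h'
      exact hreg ⟨G.minDegree, fun v => h' v⟩
    obtain ⟨v₀, hv₀⟩ := hne
    have hv₀lt : G.minDegree < G.degree v₀ := lt_of_le_of_ne (hδdeg v₀) (Ne.symm hv₀)
    -- strict NK bound
    have hNKgt : ((G.minDegree : ℝ)) ^ (2 * c) < NKstar G := by
      unfold NKstar
      rw [hc, ← G.sum_degrees_eq_twice_card_edges, ← Finset.prod_pow_eq_pow_sum]
      refine Finset.prod_lt_prod (fun v _ => pow_pos hδR _) (fun v _ => hNKfac v)
        ⟨v₀, Finset.mem_univ v₀, ?_⟩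
      have hd0 : G.degree v₀ ≠ 0 := by omega
      exact pow_lt_pow_left₀ (by exact_mod_cast hv₀lt) hδR.le hd0
    -- RHS < 2c
    have hδpow : ((G.minDegree : ℝ) ^ (2 * c) : ℝ) ^ (-α / (c : ℝ))
        = (G.minDegree : ℝ) ^ (-(2 * α)) := by
      rw [← Real.rpow_natCast (G.minDegree : ℝ) (2 * c), ← Real.rpow_mul hδR.le, hexp]
    have hneg : -α / (c : ℝ) < 0 := div_neg_of_neg_of_pos (neg_neg_of_pos hα) hcR
    have hlt : NKstar G ^ (-α / (c : ℝ)) < (G.minDegree : ℝ) ^ (-(2 * α)) := by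
      rw [← hδpow]
      exact Real.rpow_lt_rpow_of_neg (by positivity) hNKgt hneg
    have hRHSlt : 2 * (G.minDegree : ℝ) ^ (2 * α) * (c : ℝ) * NKstar G ^ (-α / (c : ℝ))
        < 2 * (c : ℝ) := by
      have hpos : (0:ℝ) < 2 * (G.minDegree : ℝ) ^ (2 * α) * (c : ℝ) := by positivity
      calc 2 * (G.minDegree : ℝ) ^ (2 * α) * (c : ℝ) * NKstar G ^ (-α / (c : ℝ))
          < 2 * (G.minDegree : ℝ) ^ (2 * α) * (c : ℝ) * (G.minDegree : ℝ) ^ (-(2 * α)) :=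
            (mul_lt_mul_iff_right₀ hpos).mpr hlt
        _ = 2 * (c : ℝ) * ((G.minDegree : ℝ) ^ (2 * α) * (G.minDegree : ℝ) ^ (-(2 * α))) := by
            ring
        _ = 2 * (c : ℝ) := by
            rw [← Real.rpow_add hδR, add_neg_cancel, Real.rpow_zero, mul_one]
    rw [h] at hSDDge
    exact absurd hRHSlt (not_lt.mpr hSDDge)
  · rintro ⟨k, hk⟩
    obtain ⟨e, he⟩ := Finset.card_pos.mp hm
    have hV : Nonempty V := by
      induction e using Sym2.ind with
      | _ u v => exact ⟨u⟩
    have hδk : G.minDegree = k := by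
      refine le_antisymm ?_ ?_
      · exact (G.minDegree_le_degree hV.some).trans_eq (hk hV.some)
      · exact G.le_minDegree_of_forall_le_degree k (fun v => (hk v).ge)
    have hkR : (0:ℝ) < (k : ℝ) := hδk ▸ hδR
    have hSDDeq : SDD G α = 2 * (c : ℝ) := by
      unfold SDD
      rw [Finset.sum_congr rfl (g := fun _ => (2:ℝ)) ?_, Finset.sum_const, nsmul_eq_mul, ← hc]
      · ring
      · intro e' _
        induction e' using Sym2.ind with
        | _ u v =>
          rw [Sym2.lift_mk]
          dsimp only
          rw [hk u, hk v, div_self (ne_of_gt (rpow_pos_of_pos hkR α))]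
          norm_num
    have hNKeq : NKstar G = ((k : ℝ)) ^ (2 * c) := by
      unfold NKstar
      rw [hc, ← G.sum_degrees_eq_twice_card_edges, ← Finset.prod_pow_eq_pow_sum]
      exact Finset.prod_congr rfl (fun v _ => by rw [hk v])
    rw [hSDDeq, hNKeq, hδk, ← Real.rpow_natCast (k : ℝ) (2 * c), ← Real.rpow_mul hkR.le,
      hexp,
      show (2:ℝ) * (k:ℝ) ^ (2*α) * (c:ℝ) * (k:ℝ) ^ (-(2*α))
        = 2 * (c:ℝ) * ((k:ℝ) ^ (2*α) * (k:ℝ) ^ (-(2*α))) from by ring,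
      ← Real.rpow_add hkR, add_neg_cancel, Real.rpow_zero, mul_one]
end

section
/- Let G be a finite simple graph with m edges, minimum degree δ ≥ 1 and maximum degree exactly δ + 1, let α > 0 be real, and let A be the number of edges uv ∈ E(G) with d_u ≠ d_v. Then SDD_α(G) = 2m + A · ((δ+1)^α/δ^α + δ^α/(δ+1)^α − 2). -/
open Real Finset

theorem sdd_formula_maxdeg_succ_mindeg {V : Type*} [Fintype V] (G : SimpleGraph V)
    [DecidableRel G.Adj] (hδ : 1 ≤ G.minDegree) (hΔ : G.maxDegree = G.minDegree + 1)
    {α : ℝ} (hα : 0 < α) :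
    SDD G α = 2 * (G.edgeFinset.card : ℝ) +
      ({e ∈ G.edgeSet | ∃ u v, e = s(u, v) ∧ G.degree u ≠ G.degree v}.ncard : ℝ) *
        (((G.minDegree : ℝ) + 1) ^ α / (G.minDegree : ℝ) ^ α +
         (G.minDegree : ℝ) ^ α / ((G.minDegree : ℝ) + 1) ^ α - 2) := by
  classical
  set δ := G.minDegree with hδdef
  have hδpos : (0:ℝ) < (δ:ℝ) := by exact_mod_cast hδ
  have hδ1pos : (0:ℝ) < (δ:ℝ) + 1 := by linarith
  have hdeg : ∀ u : V, G.degree u = δ ∨ G.degree u = δ + 1 := by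
    intro u
    have h1 := G.minDegree_le_degree u
    have h2 := G.degree_le_maxDegree u
    omega
  set big : ℝ := ((δ:ℝ) + 1) ^ α / (δ:ℝ) ^ α + (δ:ℝ) ^ α / ((δ:ℝ) + 1) ^ α with hbig
  set P : Sym2 V → Prop := fun e => ∃ u v, e = s(u, v) ∧ G.degree u ≠ G.degree v with hP
  set f : Sym2 V → ℝ := fun e => Sym2.lift
    ⟨fun u v => (G.degree u : ℝ) ^ α / (G.degree v : ℝ) ^ α +
                (G.degree v : ℝ) ^ α / (G.degree u : ℝ) ^ α,
     fun u v => by ring⟩ e with hf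
  have hset : {e ∈ G.edgeSet | P e} = ↑(G.edgeFinset.filter P) := by
    ext e
    simp [SimpleGraph.mem_edgeFinset]
  have hncard : ({e ∈ G.edgeSet | P e}.ncard : ℝ) = ((G.edgeFinset.filter P).card : ℝ) := by
    rw [hset, Set.ncard_coe_finset]
  -- value on P edges
  have hvalP : ∀ e ∈ G.edgeFinset.filter P, f e = big := by
    intro e he
    rw [mem_filter] at he
    obtain ⟨_, u, v, rfl, huv⟩ := he
    have hu := hdeg u
    have hv := hdeg v
    simp only [hf, Sym2.lift_mk]
    rcases hu with hu | hu <;> rcases hv with hv | hv <;>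
      first
      | (exact absurd (by omega : G.degree u = G.degree v) huv)
      | (rw [hu, hv, hbig]; push_cast; ring)
  have hvalnP : ∀ e ∈ G.edgeFinset.filter (fun e => ¬ P e), f e = 2 := by
    intro e he
    rw [mem_filter] at he
    obtain ⟨he1, he2⟩ := he
    induction e using Sym2.ind with
    | _ u v =>
      have heq : G.degree u = G.degree v := by
        by_contra h
        exact he2 ⟨u, v, rfl, h⟩
      simp only [hf, Sym2.lift_mk, heq]
      have : ((G.degree v : ℝ)) ^ α ≠ 0 := by
        have : (0:ℝ) < (G.degree v : ℝ) := by
          have := hdeg v; rcases this with h | h <;> rw [h] <;> push_cast <;> linarith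
        positivity
      field_simp
      norm_num
  have hsplit := Finset.sum_filter_add_sum_filter_not G.edgeFinset P f
  have hcard := Finset.card_filter_add_card_filter_not (s := G.edgeFinset) (p := P)
  have h1 : ∑ e ∈ G.edgeFinset.filter P, f e = ((G.edgeFinset.filter P).card : ℝ) * big := by
    rw [Finset.sum_congr rfl hvalP, Finset.sum_const, nsmul_eq_mul]
  have h2 : ∑ e ∈ G.edgeFinset.filter (fun e => ¬ P e), f e
      = ((G.edgeFinset.filter (fun e => ¬ P e)).card : ℝ) * 2 := by
    rw [Finset.sum_congr rfl hvalnP, Finset.sum_const, nsmul_eq_mul]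
  have hSDD : SDD G α = ∑ e ∈ G.edgeFinset, f e := rfl
  have hcardR : ((G.edgeFinset.filter P).card : ℝ)
      + ((G.edgeFinset.filter (fun e => ¬ P e)).card : ℝ) = (G.edgeFinset.card : ℝ) := by
    exact_mod_cast hcard
  rw [hSDD, ← hsplit, h1, h2, hncard, ← hcardR]
  ring
end

section
/- Let G be a finite simple graph with m edges, minimum degree δ ≥ 1 and maximum degree Δ with Δ > δ + 1, and let α > 0 be real. Let A_0, A_1, A_2 be the cardinalities of the edge sets F_0 = {uv ∈ E(G) : d_u = δ, d_v = Δ}, F_1 = {uv ∈ E(G) : d_u = δ, δ < d_v < Δ}, F_2 = {uv ∈ E(G) : d_u = Δ, δ < d_v < Δ}, respectively. Then SDD_α(G) ≥ 2m + A_0 (Δ^α/δ^α + δ^α/Δ^α − 2) + A_1 ((δ+1)^α/δ^α + δ^α/(δ+1)^α − 2) + A_2 (Δ^α/(Δ−1)^α + (Δ−1)^α/Δ^α − 2). -/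
open Real Finset

noncomputable def sddWeight (α x y : ℝ) : ℝ := x ^ α / y ^ α + y ^ α / x ^ α

theorem sddWeight_comm (α x y : ℝ) : sddWeight α x y = sddWeight α y x :=
  add_comm _ _

theorem sddWeight_eq_two_mul_cosh (α : ℝ) {x y : ℝ} (hx : 0 < x) (hy : 0 < y) :
    sddWeight α x y = 2 * cosh (α * (log x - log y)) := by
  rw [sddWeight, rpow_def_of_pos hx, rpow_def_of_pos hy, cosh_eq, ← exp_sub, ← exp_sub]
  ring_nf

theorem two_le_sddWeight (α : ℝ) {x y : ℝ} (hx : 0 < x) (hy : 0 < y) :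
    2 ≤ sddWeight α x y := by
  rw [sddWeight_eq_two_mul_cosh α hx hy]
  linarith [one_le_cosh (α * (log x - log y))]

theorem sddWeight_le_sddWeight_of_abs_log_le (α : ℝ) {x y z w : ℝ} (hx : 0 < x) (hy : 0 < y)
    (hz : 0 < z) (hw : 0 < w) (h : |log x - log y| ≤ |log z - log w|) :
    sddWeight α x y ≤ sddWeight α z w := by
  rw [sddWeight_eq_two_mul_cosh α hx hy, sddWeight_eq_two_mul_cosh α hz hw,
    mul_le_mul_iff_right₀ two_pos, cosh_le_cosh, abs_mul, abs_mul]
  exact mul_le_mul_of_nonneg_left h (abs_nonneg α)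

theorem sddWeight_succ_le (α : ℝ) {a b : ℕ} (ha : 0 < a) (hab : a + 1 ≤ b) :
    sddWeight α (a + 1) a ≤ sddWeight α a b := by
  have ha' : (0 : ℝ) < a := Nat.cast_pos.2 ha
  have hab' : (a : ℝ) + 1 ≤ b := by exact_mod_cast hab
  refine sddWeight_le_sddWeight_of_abs_log_le α (by positivity) ha' ha' (by linarith) ?_
  rw [abs_of_nonneg (sub_nonneg.2 (log_le_log ha' (by linarith))), abs_sub_comm,
    abs_of_nonneg (sub_nonneg.2 (log_le_log ha' (by linarith)))]
  linarith [log_le_log (by linarith) hab']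

theorem sddWeight_sub_one_le (α : ℝ) {a b : ℕ} (hb : 0 < b) (hba : b + 1 ≤ a) :
    sddWeight α a (a - 1) ≤ sddWeight α a b := by
  have hb' : (0 : ℝ) < b := Nat.cast_pos.2 hb
  have hba' : (b : ℝ) ≤ a - 1 := by
    have : (b : ℝ) + 1 ≤ a := by exact_mod_cast hba
    linarith
  refine sddWeight_le_sddWeight_of_abs_log_le α (by linarith) (by linarith) (by linarith) hb' ?_
  rw [abs_of_nonneg (sub_nonneg.2 (log_le_log (by linarith) (by linarith))),
    abs_of_nonneg (sub_nonneg.2 (log_le_log hb' (by linarith)))]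
  linarith [log_le_log hb' hba']

theorem Finset.sum_filter_add_sum_filter_add_sum_filter_le {ι M : Type*} [AddCommMonoid M]
    [PartialOrder M] [IsOrderedAddMonoid M] {s : Finset ι} {f : ι → M} (hf : ∀ i ∈ s, 0 ≤ f i)
    {p q r : ι → Prop} [DecidablePred p] [DecidablePred q] [DecidablePred r]
    (hpq : ∀ i ∈ s, p i → ¬q i) (hpr : ∀ i ∈ s, p i → ¬r i) (hqr : ∀ i ∈ s, q i → ¬r i) :
    ∑ i ∈ s.filter p, f i + ∑ i ∈ s.filter q, f i + ∑ i ∈ s.filter r, f i ≤ ∑ i ∈ s, f i := by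
  classical
  rw [← sum_union (disjoint_filter.2 hpq), ← filter_or, ← sum_union]
  · exact sum_le_sum_of_subset_of_nonneg (union_subset (filter_subset _ _) (filter_subset _ _))
      fun i hi _ => hf i hi
  · exact disjoint_filter.2 fun i hi h => h.elim (hpr i hi) (hqr i hi)

namespace SimpleGraph

variable {V : Type*} [Fintype V] (G : SimpleGraph V) [DecidableRel G.Adj]

noncomputable def sddTerm (α : ℝ) : Sym2 V → ℝ :=
  Sym2.lift ⟨fun u v => sddWeight α (G.degree u) (G.degree v),
    fun _ _ => sddWeight_comm α _ _⟩

theorem sdd_eq_sum_sddTerm (α : ℝ) : SDD G α = ∑ e ∈ G.edgeFinset, G.sddTerm α e := rfl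

theorem sum_sddTerm_sub_two (α : ℝ) :
    ∑ e ∈ G.edgeFinset, (G.sddTerm α e - 2) = SDD G α - 2 * #G.edgeFinset := by
  rw [sdd_eq_sum_sddTerm, sum_sub_distrib, sum_const, nsmul_eq_mul, mul_comm]

theorem two_le_sddTerm (α : ℝ) {e : Sym2 V} (he : e ∈ G.edgeSet) : 2 ≤ G.sddTerm α e := by
  induction e using Sym2.ind with
  | _ u v =>
    exact two_le_sddWeight α (Nat.cast_pos.2 he.degree_pos_left)
      (Nat.cast_pos.2 he.symm.degree_pos_left)

theorem ncard_sep_edgeSet (P : Sym2 V → Prop) [DecidablePred P] :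
    {e ∈ G.edgeSet | P e}.ncard = #(G.edgeFinset.filter P) := by
  rw [← Set.ncard_coe_finset, coe_filter]
  simp only [mem_edgeFinset]

def degreeClass (p q : ℕ → Prop) (e : Sym2 V) : Prop :=
  ∃ u v, e = s(u, v) ∧ p (G.degree u) ∧ q (G.degree v)

instance [DecidableEq V] (p q : ℕ → Prop) [DecidablePred p] [DecidablePred q] :
    DecidablePred (G.degreeClass p q) :=
  fun _ => by unfold degreeClass; infer_instance

theorem not_degreeClass_of_degreeClass {p q p' q' : ℕ → Prop}
    (h : ∀ a b, p a → q b → ¬(p' a ∧ q' b) ∧ ¬(p' b ∧ q' a)) {e : Sym2 V}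
    (he : G.degreeClass p q e) : ¬G.degreeClass p' q' e := by
  obtain ⟨u, v, rfl, hu, hv⟩ := he
  rintro ⟨x, y, hxy, hx, hy⟩
  rcases Sym2.eq_iff.1 hxy with ⟨rfl, rfl⟩ | ⟨rfl, rfl⟩
  · exact (h _ _ hu hv).1 ⟨hx, hy⟩
  · exact (h _ _ hu hv).2 ⟨hx, hy⟩

theorem card_filter_degreeClass_mul_le_sum (α : ℝ) {p q : ℕ → Prop}
    [DecidablePred (G.degreeClass p q)] {c : ℝ}
    (h : ∀ u v, G.Adj u v → p (G.degree u) → q (G.degree v) →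
      c ≤ sddWeight α (G.degree u) (G.degree v)) :
    #(G.edgeFinset.filter (G.degreeClass p q)) * (c - 2) ≤
      ∑ e ∈ G.edgeFinset.filter (G.degreeClass p q), (G.sddTerm α e - 2) := by
  rw [← nsmul_eq_mul]
  refine card_nsmul_le_sum _ _ _ fun e he => ?_
  obtain ⟨huv, u, v, rfl, hu, hv⟩ := mem_filter.1 he
  exact sub_le_sub_right (h u v (G.mem_edgeFinset.1 huv) hu hv) 2

end SimpleGraph

theorem sdd_lower_bound_dD_general {V : Type*} [Fintype V] (G : SimpleGraph V)
    [DecidableRel G.Adj] {α : ℝ} (A0 A1 A2 : ℕ)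
    (hA0 : A0 = {e ∈ G.edgeSet | ∃ u v, e = s(u, v) ∧
      G.degree u = G.minDegree ∧ G.degree v = G.maxDegree}.ncard)
    (hA1 : A1 = {e ∈ G.edgeSet | ∃ u v, e = s(u, v) ∧
      G.degree u = G.minDegree ∧ G.minDegree < G.degree v ∧ G.degree v < G.maxDegree}.ncard)
    (hA2 : A2 = {e ∈ G.edgeSet | ∃ u v, e = s(u, v) ∧
      G.degree u = G.maxDegree ∧ G.minDegree < G.degree v ∧ G.degree v < G.maxDegree}.ncard) :
    2 * (G.edgeFinset.card : ℝ) +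
      (A0 : ℝ) * ((G.maxDegree : ℝ) ^ α / (G.minDegree : ℝ) ^ α +
        (G.minDegree : ℝ) ^ α / (G.maxDegree : ℝ) ^ α - 2) +
      (A1 : ℝ) * (((G.minDegree : ℝ) + 1) ^ α / (G.minDegree : ℝ) ^ α +
        (G.minDegree : ℝ) ^ α / ((G.minDegree : ℝ) + 1) ^ α - 2) +
      (A2 : ℝ) * ((G.maxDegree : ℝ) ^ α / ((G.maxDegree : ℝ) - 1) ^ α +
        ((G.maxDegree : ℝ) - 1) ^ α / (G.maxDegree : ℝ) ^ α - 2)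
    ≤ SDD G α := by
  classical
  set δ := G.minDegree
  set Δ := G.maxDegree
  have hF0 : A0 = #(G.edgeFinset.filter (G.degreeClass (· = δ) (· = Δ))) :=
    hA0.trans (G.ncard_sep_edgeSet _)
  have hF1 : A1 = #(G.edgeFinset.filter (G.degreeClass (· = δ) fun d => δ < d ∧ d < Δ)) :=
    hA1.trans (G.ncard_sep_edgeSet _)
  have hF2 : A2 = #(G.edgeFinset.filter (G.degreeClass (· = Δ) fun d => δ < d ∧ d < Δ)) :=
    hA2.trans (G.ncard_sep_edgeSet _)
  have h0 := G.card_filter_degreeClass_mul_le_sum α (p := (· = δ)) (q := (· = Δ))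
    (c := sddWeight α Δ δ) fun u v _ hu hv => by rw [hu, hv, sddWeight_comm]
  have h1 := G.card_filter_degreeClass_mul_le_sum α (p := (· = δ))
    (q := fun d => δ < d ∧ d < Δ) (c := sddWeight α (δ + 1) δ) fun u v huv hu hv => by
      rw [← hu]; exact sddWeight_succ_le α huv.degree_pos_left (hu ▸ hv.1)
  have h2 := G.card_filter_degreeClass_mul_le_sum α (p := (· = Δ))
    (q := fun d => δ < d ∧ d < Δ) (c := sddWeight α Δ (Δ - 1)) fun u v huv hu hv => by
      rw [← hu]; exact sddWeight_sub_one_le α huv.symm.degree_pos_left (hu ▸ hv.2)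
  have hsum := Finset.sum_filter_add_sum_filter_add_sum_filter_le (s := G.edgeFinset)
    (p := G.degreeClass (· = δ) (· = Δ)) (q := G.degreeClass (· = δ) fun d => δ < d ∧ d < Δ)
    (r := G.degreeClass (· = Δ) fun d => δ < d ∧ d < Δ)
    (fun e he => sub_nonneg.2 (G.two_le_sddTerm α (G.mem_edgeFinset.1 he)))
    (fun _ _ => G.not_degreeClass_of_degreeClass fun _ _ => by omega)
    (fun _ _ => G.not_degreeClass_of_degreeClass fun _ _ => by omega)
    (fun _ _ => G.not_degreeClass_of_degreeClass fun _ _ => by omega)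
  rw [hF0, hF1, hF2]
  simp only [sddWeight] at h0 h1 h2
  linarith [G.sum_sddTerm_sub_two α]

theorem sdd_lower_bound_dD {V : Type*} [Fintype V] (G : SimpleGraph V)
    [DecidableRel G.Adj] (hδ : 1 ≤ G.minDegree) (hΔ : G.minDegree + 1 < G.maxDegree)
    {α : ℝ} (hα : 0 < α) (A0 A1 A2 : ℕ)
    (hA0 : A0 = {e ∈ G.edgeSet | ∃ u v, e = s(u, v) ∧
      G.degree u = G.minDegree ∧ G.degree v = G.maxDegree}.ncard)
    (hA1 : A1 = {e ∈ G.edgeSet | ∃ u v, e = s(u, v) ∧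
      G.degree u = G.minDegree ∧ G.minDegree < G.degree v ∧ G.degree v < G.maxDegree}.ncard)
    (hA2 : A2 = {e ∈ G.edgeSet | ∃ u v, e = s(u, v) ∧
      G.degree u = G.maxDegree ∧ G.minDegree < G.degree v ∧ G.degree v < G.maxDegree}.ncard) :
    2 * (G.edgeFinset.card : ℝ) +
      (A0 : ℝ) * ((G.maxDegree : ℝ) ^ α / (G.minDegree : ℝ) ^ α +
        (G.minDegree : ℝ) ^ α / (G.maxDegree : ℝ) ^ α - 2) +
      (A1 : ℝ) * (((G.minDegree : ℝ) + 1) ^ α / (G.minDegree : ℝ) ^ α +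
        (G.minDegree : ℝ) ^ α / ((G.minDegree : ℝ) + 1) ^ α - 2) +
      (A2 : ℝ) * ((G.maxDegree : ℝ) ^ α / ((G.maxDegree : ℝ) - 1) ^ α +
        ((G.maxDegree : ℝ) - 1) ^ α / (G.maxDegree : ℝ) ^ α - 2)
    ≤ SDD G α :=
  sdd_lower_bound_dD_general G A0 A1 A2 hA0 hA1 hA2
end

section
/- Let G be a finite simple graph with m edges, minimum degree δ ≥ 1 and maximum degree Δ with Δ > δ + 1, and let α > 0 be real. Let A_1, A_2 be the cardinalities of the edge sets F_1 = {uv ∈ E(G) : d_u = δ, δ < d_v < Δ} and F_2 = {uv ∈ E(G) : d_u = Δ, δ < d_v < Δ}, respectively. Then SDD_α(G) ≤ (m − A_1 − A_2)(Δ^α/δ^α + δ^α/Δ^α) + A_1 ((Δ−1)^α/δ^α + δ^α/(Δ−1)^α) + A_2 (Δ^α/(δ+1)^α + (δ+1)^α/Δ^α). -/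
open Real Finset

lemma frac_bound {a b p q : ℝ} (hp : 0 < p) (hpa : p ≤ a) (hpb : p ≤ b)
    (haq : a ≤ q) (hbq : b ≤ q) : a / b + b / a ≤ q / p + p / q := by
  have ha : 0 < a := hp.trans_le hpa
  have hb : 0 < b := hp.trans_le hpb
  have hq : 0 < q := ha.trans_le haq
  rw [div_add_div _ _ hb.ne' ha.ne', div_add_div _ _ hp.ne' hq.ne',
    div_le_div_iff₀ (by positivity) (by positivity)]
  nlinarith [mul_nonneg (show (0:ℝ) ≤ q * a - p * b by nlinarith)
    (show (0:ℝ) ≤ q * b - p * a by nlinarith)]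

lemma key_bound {α p q x y : ℝ} (hα : 0 < α) (hp : 0 < p) (hpx : p ≤ x) (hpy : p ≤ y)
    (hxq : x ≤ q) (hyq : y ≤ q) :
    x ^ α / y ^ α + y ^ α / x ^ α ≤ q ^ α / p ^ α + p ^ α / q ^ α :=
  frac_bound (Real.rpow_pos_of_pos hp α)
    (Real.rpow_le_rpow hp.le hpx hα.le) (Real.rpow_le_rpow hp.le hpy hα.le)
    (Real.rpow_le_rpow (hp.trans_le hpx).le hxq hα.le)
    (Real.rpow_le_rpow (hp.trans_le hpy).le hyq hα.le)

theorem sdd_upper_bound_dD {V : Type*} [Fintype V] (G : SimpleGraph V)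
    [DecidableRel G.Adj] (hδ : 1 ≤ G.minDegree) (hΔ : G.minDegree + 1 < G.maxDegree)
    {α : ℝ} (hα : 0 < α) (A1 A2 : ℕ)
    (hA1 : A1 = {e ∈ G.edgeSet | ∃ u v, e = s(u, v) ∧
      G.degree u = G.minDegree ∧ G.minDegree < G.degree v ∧ G.degree v < G.maxDegree}.ncard)
    (hA2 : A2 = {e ∈ G.edgeSet | ∃ u v, e = s(u, v) ∧
      G.degree u = G.maxDegree ∧ G.minDegree < G.degree v ∧ G.degree v < G.maxDegree}.ncard) :
    SDD G α ≤
      ((G.edgeFinset.card : ℝ) - (A1 : ℝ) - (A2 : ℝ)) *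
        ((G.maxDegree : ℝ) ^ α / (G.minDegree : ℝ) ^ α +
         (G.minDegree : ℝ) ^ α / (G.maxDegree : ℝ) ^ α) +
      (A1 : ℝ) * (((G.maxDegree : ℝ) - 1) ^ α / (G.minDegree : ℝ) ^ α +
        (G.minDegree : ℝ) ^ α / ((G.maxDegree : ℝ) - 1) ^ α) +
      (A2 : ℝ) * ((G.maxDegree : ℝ) ^ α / ((G.minDegree : ℝ) + 1) ^ α +
        ((G.minDegree : ℝ) + 1) ^ α / (G.maxDegree : ℝ) ^ α) := by
  classical
  set δ := G.minDegree with hδdef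
  set Δ := G.maxDegree with hΔdef
  set f : Sym2 V → ℝ := fun e => Sym2.lift
    ⟨fun u v => (G.degree u : ℝ) ^ α / (G.degree v : ℝ) ^ α +
                (G.degree v : ℝ) ^ α / (G.degree u : ℝ) ^ α,
     fun u v => by ring⟩ e with hf
  set P1 : Sym2 V → Prop := fun e => ∃ u v, e = s(u, v) ∧
      G.degree u = δ ∧ δ < G.degree v ∧ G.degree v < Δ with hP1
  set P2 : Sym2 V → Prop := fun e => ∃ u v, e = s(u, v) ∧
      G.degree u = Δ ∧ δ < G.degree v ∧ G.degree v < Δ with hP2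
  set S1 := G.edgeFinset.filter P1 with hS1
  set S2 := G.edgeFinset.filter P2 with hS2
  set S0 := G.edgeFinset.filter (fun e => ¬ P1 e ∧ ¬ P2 e) with hS0
  -- disjointness of P1 and P2
  have hdisj : ∀ e, P1 e → P2 e → False := by
    rintro e ⟨u, v, rfl, hu, hv1, hv2⟩ ⟨u', v', he, hu', hv1', hv2'⟩
    rw [Sym2.eq_iff] at he
    rcases he with ⟨rfl, rfl⟩ | ⟨rfl, rfl⟩
    · rw [hu] at hu'; omega
    · omega
  -- cardinalities
  have hcard1 : (A1 : ℕ) = S1.card := by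
    rw [hA1]
    have : {e ∈ G.edgeSet | P1 e} = ↑S1 := by
      ext e
      simp [hS1, SimpleGraph.mem_edgeFinset, Set.mem_setOf_eq]
    rw [this, Set.ncard_coe_finset]
  have hcard2 : (A2 : ℕ) = S2.card := by
    rw [hA2]
    have : {e ∈ G.edgeSet | P2 e} = ↑S2 := by
      ext e
      simp [hS2, SimpleGraph.mem_edgeFinset, Set.mem_setOf_eq]
    rw [this, Set.ncard_coe_finset]
  -- splitting sums
  have hsplit : ∀ g : Sym2 V → ℝ, ∑ e ∈ G.edgeFinset, g e =
      ∑ e ∈ S0, g e + ∑ e ∈ S1, g e + ∑ e ∈ S2, g e := by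
    intro g
    rw [← Finset.sum_filter_add_sum_filter_not G.edgeFinset P1 g]
    rw [← Finset.sum_filter_add_sum_filter_not (G.edgeFinset.filter fun e => ¬ P1 e) P2 g]
    rw [Finset.filter_filter, Finset.filter_filter]
    have e2 : (G.edgeFinset.filter fun e => ¬ P1 e ∧ P2 e) = S2 := by
      apply Finset.filter_congr
      intro e _
      constructor
      · rintro ⟨_, h⟩; exact h
      · intro h; exact ⟨fun h1 => hdisj e h1 h, h⟩
    rw [e2]
    ring
  have hcards : (G.edgeFinset.card : ℝ) = S0.card + S1.card + S2.card := by
    have := hsplit (fun _ => (1 : ℝ))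
    simpa [Finset.sum_const, nsmul_eq_mul] using this
  -- degree facts as reals
  have hδ1 : (1 : ℝ) ≤ (δ : ℝ) := by exact_mod_cast hδ
  have hδ0 : (0 : ℝ) < (δ : ℝ) := by linarith
  have hΔδ : (δ : ℝ) + 1 < (Δ : ℝ) := by exact_mod_cast hΔ
  have hdegl : ∀ v : V, (δ : ℝ) ≤ G.degree v := fun v => by
    exact_mod_cast G.minDegree_le_degree v
  have hdegu : ∀ v : V, (G.degree v : ℝ) ≤ (Δ : ℝ) := fun v => by
    exact_mod_cast G.degree_le_maxDegree v
  -- per-edge bounds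
  have hb0 : ∀ e ∈ S0, f e ≤ (Δ : ℝ) ^ α / (δ : ℝ) ^ α + (δ : ℝ) ^ α / (Δ : ℝ) ^ α := by
    intro e he
    induction e with
    | _ u v =>
      exact key_bound hα hδ0 (hdegl u) (hdegl v) (hdegu u) (hdegu v)
  have hb1 : ∀ e ∈ S1, f e ≤ ((Δ : ℝ) - 1) ^ α / (δ : ℝ) ^ α + (δ : ℝ) ^ α / ((Δ : ℝ) - 1) ^ α := by
    intro e he
    rw [hS1, Finset.mem_filter] at he
    obtain ⟨-, u, v, rfl, hu, hv1, hv2⟩ := he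
    have h1 : (G.degree u : ℝ) = (δ : ℝ) := by exact_mod_cast hu
    have h2 : (δ : ℝ) ≤ (G.degree v : ℝ) := by
      exact_mod_cast Nat.le_of_lt hv1
    have h3 : (G.degree v : ℝ) ≤ (Δ : ℝ) - 1 := by
      have : (G.degree v : ℝ) + 1 ≤ (Δ : ℝ) := by exact_mod_cast hv2
      linarith
    have h4 : (G.degree u : ℝ) ≤ (Δ : ℝ) - 1 := by rw [h1]; linarith
    have h5 : (δ : ℝ) ≤ (G.degree u : ℝ) := h1.ge
    exact key_bound hα hδ0 h5 h2 h4 h3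
  have hb2 : ∀ e ∈ S2, f e ≤ (Δ : ℝ) ^ α / ((δ : ℝ) + 1) ^ α + ((δ : ℝ) + 1) ^ α / (Δ : ℝ) ^ α := by
    intro e he
    rw [hS2, Finset.mem_filter] at he
    obtain ⟨-, u, v, rfl, hu, hv1, hv2⟩ := he
    have h1 : (G.degree u : ℝ) = (Δ : ℝ) := by exact_mod_cast hu
    have h2 : (δ : ℝ) + 1 ≤ (G.degree v : ℝ) := by exact_mod_cast hv1
    have h3 : (G.degree v : ℝ) ≤ (Δ : ℝ) := hdegu v
    have h5 : (δ : ℝ) + 1 ≤ (G.degree u : ℝ) := by rw [h1]; linarith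
    exact key_bound hα (by linarith) h5 h2 h1.le h3
  -- assemble
  have hsum0 : ∑ e ∈ S0, f e ≤ (S0.card : ℝ) *
      ((Δ : ℝ) ^ α / (δ : ℝ) ^ α + (δ : ℝ) ^ α / (Δ : ℝ) ^ α) := by
    have := Finset.sum_le_card_nsmul S0 f _ hb0
    simpa [nsmul_eq_mul, mul_add] using this
  have hsum1 : ∑ e ∈ S1, f e ≤ (S1.card : ℝ) *
      (((Δ : ℝ) - 1) ^ α / (δ : ℝ) ^ α + (δ : ℝ) ^ α / ((Δ : ℝ) - 1) ^ α) := by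
    have := Finset.sum_le_card_nsmul S1 f _ hb1
    simpa [nsmul_eq_mul, mul_add] using this
  have hsum2 : ∑ e ∈ S2, f e ≤ (S2.card : ℝ) *
      ((Δ : ℝ) ^ α / ((δ : ℝ) + 1) ^ α + ((δ : ℝ) + 1) ^ α / (Δ : ℝ) ^ α) := by
    have := Finset.sum_le_card_nsmul S2 f _ hb2
    simpa [nsmul_eq_mul, mul_add] using this
  have hS0card : (S0.card : ℝ) = (G.edgeFinset.card : ℝ) - (A1 : ℝ) - (A2 : ℝ) := by
    rw [hcard1, hcard2]
    linarith [hcards]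
  have hSDD : SDD G α = ∑ e ∈ S0, f e + ∑ e ∈ S1, f e + ∑ e ∈ S2, f e := hsplit f
  rw [hSDD]
  rw [hcard1, hcard2] at hS0card
  rw [hcard1, hcard2, ← hS0card]
  linarith [hsum0, hsum1, hsum2]
end
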